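/- arXiv:1210.0194 — 6 statements merged into one kernel-verified Lean document; each statement's English description precedes it below -/
import Mathlib

section
/- Let C be a convex subset of a finite-dimensional real vector space V, let a ∈ V be affinely independent of C (i.e. a ∉ aff(C)), and let F be a face of C. Then D = conv(F ∪ {a}) is a face of conv(C ∪ {a}). -/
open Set

/-- The dimension of a subset `S` of a real vector space: `d` where `d+1` is the maximal
number of affinely independent points in `S` (so `dim ∅ = -1`). -/
noncomputable def setDim {V : Type*} [AddCommGroup V] [Module ℝ V] (S : Set V) : ℤ :=
  ((sSup {n : ℕ | ∃ p : Fin n → V, (∀ i, p i ∈ S) ∧ AffineIndependent ℝ p} : ℕ) : ℤ) - 1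

/-- A face of a convex set `C`: a nonempty convex subset `F ⊆ C` such that whenever
`x, y ∈ C`, `0 < λ < 1` and `λ•x + (1-λ)•y ∈ F`, then `x, y ∈ F`. -/
def IsFaceOf {V : Type*} [AddCommGroup V] [Module ℝ V] (F C : Set V) : Prop :=
  F.Nonempty ∧ Convex ℝ F ∧ F ⊆ C ∧
    ∀ x ∈ C, ∀ y ∈ C, ∀ l : ℝ, 0 < l → l < 1 → l • x + (1 - l) • y ∈ F → x ∈ F ∧ y ∈ F

/-- A minus-face of a convex set `C` is a face of dimension `dim C - 1`. -/
def IsMinusFace {V : Type*} [AddCommGroup V] [Module ℝ V] (F C : Set V) : Prop :=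
  IsFaceOf F C ∧ setDim F = setDim C - 1

/-- A polytope: the convex hull of finitely many points. -/
def IsPolytope {V : Type*} [AddCommGroup V] [Module ℝ V] (S : Set V) : Prop :=
  ∃ t : Finset V, S = convexHull ℝ (t : Set V)

/-- A simplex: the convex hull of finitely many affinely independent points. -/
def IsSimplex {V : Type*} [AddCommGroup V] [Module ℝ V] (S : Set V) : Prop :=
  ∃ t : Finset V, AffineIndependent ℝ ((↑) : ↥(t : Set V) → V) ∧ S = convexHull ℝ (t : Set V)

/-- An abstract state space `(A, A₊, u)`: `A₊` is a closed generating cone in the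
finite-dimensional real vector space `A`, and `u` is a linear functional which is strictly
positive on `A₊ \ {0}`. -/
structure IsAbstractStateSpace {A : Type*} [NormedAddCommGroup A] [NormedSpace ℝ A]
    [FiniteDimensional ℝ A] (Apos : Set A) (u : A →ₗ[ℝ] ℝ) : Prop where
  closed : IsClosed Apos
  add_mem : ∀ x ∈ Apos, ∀ y ∈ Apos, x + y ∈ Apos
  smul_mem : ∀ (a : ℝ), 0 ≤ a → ∀ x ∈ Apos, a • x ∈ Apos
  pointed : ∀ x, x ∈ Apos → -x ∈ Apos → x = 0
  generating : ∀ x : A, ∃ y ∈ Apos, ∃ z ∈ Apos, x = y - z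
  unit_pos : ∀ x ∈ Apos, x ≠ 0 → 0 < u x

/-- The set of normalized states `Ω_A`. -/
def States {A : Type*} [NormedAddCommGroup A] [NormedSpace ℝ A]
    (Apos : Set A) (u : A →ₗ[ℝ] ℝ) : Set A :=
  {ω ∈ Apos | u ω = 1}

/-- The set of effects `E_A`: linear functionals taking values in `[0,1]` on all states. -/
def Effects {A : Type*} [NormedAddCommGroup A] [NormedSpace ℝ A]
    (Apos : Set A) (u : A →ₗ[ℝ] ℝ) : Set (Module.Dual ℝ A) :=
  {f | ∀ ω ∈ States Apos u, 0 ≤ f ω ∧ f ω ≤ 1}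

/-- A pure effect is an extreme point of the convex set of effects. -/
def IsPureEffect {A : Type*} [NormedAddCommGroup A] [NormedSpace ℝ A]
    (Apos : Set A) (u : A →ₗ[ℝ] ℝ) (f : Module.Dual ℝ A) : Prop :=
  f ∈ Set.extremePoints ℝ (Effects Apos u)

/-- The certain face `F_f = {ω ∈ Ω_A | f(ω) = 1}` of an effect `f`. -/
def certainFace {A : Type*} [NormedAddCommGroup A] [NormedSpace ℝ A]
    (Apos : Set A) (u : A →ₗ[ℝ] ℝ) (f : Module.Dual ℝ A) : Set A :=
  {ω ∈ States Apos u | f ω = 1}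

/-- The impossible face `F̄_f = {ω ∈ Ω_A | f(ω) = 0}` of an effect `f`. -/
def impossibleFace {A : Type*} [NormedAddCommGroup A] [NormedSpace ℝ A]
    (Apos : Set A) (u : A →ₗ[ℝ] ℝ) (f : Module.Dual ℝ A) : Set A :=
  {ω ∈ States Apos u | f ω = 0}

/-- A transformation: a positive linear map such that `u(T ω) ≤ 1` for all states `ω`. -/
def IsTransformation {A : Type*} [NormedAddCommGroup A] [NormedSpace ℝ A]
    (Apos : Set A) (u : A →ₗ[ℝ] ℝ) (T : A →ₗ[ℝ] A) : Prop :=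
  (∀ x ∈ Apos, T x ∈ Apos) ∧ ∀ ω ∈ States Apos u, u (T ω) ≤ 1

lemma mem_convexHull_union_singleton' {V : Type*} [AddCommGroup V] [Module ℝ V]
    {S : Set V} (hS : Convex ℝ S) (hne : S.Nonempty) (a x : V) :
    x ∈ convexHull ℝ (S ∪ {a}) ↔
      ∃ t : ℝ, 0 ≤ t ∧ t ≤ 1 ∧ ∃ c ∈ S, x = t • a + (1 - t) • c := by
  rw [Set.union_singleton, convexHull_insert hne, mem_convexJoin]
  constructor
  · rintro ⟨a', ha', c, hc, hseg⟩
    rw [Set.mem_singleton_iff] at ha'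
    subst ha'
    rw [hS.convexHull_eq] at hc
    obtain ⟨u, v, hu, hv, huv, hx⟩ := hseg
    exact ⟨u, hu, by linarith, c, hc, by rw [← hx]; congr 1; rw [show (1:ℝ) - u = v by linarith]⟩
  · rintro ⟨t, ht0, ht1, c, hc, rfl⟩
    exact ⟨a, rfl, c, by rwa [hS.convexHull_eq], t, 1 - t, ht0, by linarith, by ring, rfl⟩

lemma coeff_unique_of_not_mem_affineSpan {V : Type*} [AddCommGroup V] [Module ℝ V]
    {C : Set V} {a : V} (ha : a ∉ affineSpan ℝ C) {f c : V} (hf : f ∈ C) (hc : c ∈ C)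
    {r q : ℝ} (h : r • a + (1 - r) • f = q • a + (1 - q) • c) : r = q := by
  by_contra hne
  have hrq : r - q ≠ 0 := sub_ne_zero.mpr hne
  have h2 : (r - q) • a = ((1 - q)/(r - q) * (r - q)) • (c - f) + (r - q) • f := by
    rw [div_mul_cancel₀ _ hrq]
    linear_combination (norm := module) h
  have h3 : a = ((1 - q)/(r - q)) • (c - f) + f := by
    have := h2
    rw [← smul_smul, smul_comm ((1 - q)/(r - q)) (r - q), ← smul_add] at this
    exact smul_right_injective V hrq this
  apply ha
  rw [h3]
  exact AffineSubspace.smul_vsub_vadd_mem _ _ (subset_affineSpan ℝ C hc)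
    (subset_affineSpan ℝ C hf) (subset_affineSpan ℝ C hf)

/-- If `F` is a face of a convex set `C` and `a ∉ aff(C)`, then
`conv(F ∪ {a})` is a face of `conv(C ∪ {a})`. -/
theorem face_convexHull_insert {V : Type*} [AddCommGroup V] [Module ℝ V]
    [FiniteDimensional ℝ V] (C : Set V) (hC : Convex ℝ C) (a : V)
    (ha : a ∉ affineSpan ℝ C) (F : Set V) (hF : IsFaceOf F C) :
    IsFaceOf (convexHull ℝ (F ∪ {a})) (convexHull ℝ (C ∪ {a})) := by
  obtain ⟨hFne, hFconv, hFC, hface⟩ := hF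
  have hCne : C.Nonempty := hFne.mono hFC
  have haD : a ∈ convexHull ℝ (F ∪ {a}) := subset_convexHull _ _ (Or.inr rfl)
  have memD : ∀ t : ℝ, 0 ≤ t → t ≤ 1 → ∀ f ∈ F,
      t • a + (1 - t) • f ∈ convexHull ℝ (F ∪ {a}) := fun t h0 h1 f hf =>
    (mem_convexHull_union_singleton' hFconv hFne a _).mpr ⟨t, h0, h1, f, hf, rfl⟩
  refine ⟨⟨a, haD⟩, convex_convexHull _ _,
    convexHull_mono (Set.union_subset_union_left _ hFC), ?_⟩
  intro x hx y hy l hl0 hl1 hz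
  rw [mem_convexHull_union_singleton' hC hCne] at hx hy
  obtain ⟨s, hs0, hs1, c, hc, rfl⟩ := hx
  obtain ⟨t, ht0, ht1, d, hd, rfl⟩ := hy
  rw [mem_convexHull_union_singleton' hFconv hFne] at hz
  obtain ⟨r, hr0, hr1, f, hf, hzeq⟩ := hz
  set q := l * s + (1 - l) * t with hqdef
  have hq1 : q ≤ 1 := by nlinarith
  by_cases hq : q = 1
  · have hs : s = 1 := by nlinarith
    have ht : t = 1 := by nlinarith
    constructor
    · simp only [hs, sub_self, zero_smul, add_zero, one_smul]; exact haD
    · simp only [ht, sub_self, zero_smul, add_zero, one_smul]; exact haD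
  · have hqlt : q < 1 := lt_of_le_of_ne hq1 hq
    have h1q : (0 : ℝ) < 1 - q := by linarith
    set α := l * (1 - s) / (1 - q) with hαdef
    set β := (1 - l) * (1 - t) / (1 - q) with hβdef
    have hαβ : α + β = 1 := by
      rw [hαdef, hβdef, ← add_div, div_eq_one_iff_eq h1q.ne']
      rw [hqdef]; ring
    have hα0 : 0 ≤ α := div_nonneg (by nlinarith) (by linarith)
    have hβ0 : 0 ≤ β := div_nonneg (by nlinarith) (by linarith)
    set e := α • c + β • d with hedef
    have heC : e ∈ C := hC hc hd hα0 hβ0 hαβ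
    have hze : l • (s • a + (1 - s) • c) + (1 - l) • (t • a + (1 - t) • d)
        = q • a + (1 - q) • e := by
      rw [hedef]
      match_scalars
      · rw [hqdef]; ring
      · rw [hαdef]; field_simp
      · rw [hβdef]; field_simp
    have h6 : r • a + (1 - r) • f = q • a + (1 - q) • e := hzeq.symm.trans hze
    have hqr : r = q :=
      coeff_unique_of_not_mem_affineSpan ha (hFC hf) heC h6
    have hef : f = e := by
      have h5 : q • a + (1 - q) • f = q • a + (1 - q) • e := by rw [← hqr]; exact hqr ▸ h6
      exact smul_right_injective V h1q.ne' (add_left_cancel h5)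
    have heF : e ∈ F := hef ▸ hf
    by_cases hs : s = 1
    · have hα : α = 0 := by rw [hαdef, hs]; simp
      have hβ1 : β = 1 := by linarith
      have hed : e = d := by rw [hedef, hα, hβ1]; simp
      refine ⟨?_, memD t ht0 ht1 d (hed ▸ heF)⟩
      simp only [hs, sub_self, zero_smul, add_zero, one_smul]; exact haD
    · by_cases ht : t = 1
      · have hβ : β = 0 := by rw [hβdef, ht]; simp
        have hα1 : α = 1 := by linarith
        have hec : e = c := by rw [hedef, hβ, hα1]; simp
        refine ⟨memD s hs0 hs1 c (hec ▸ heF), ?_⟩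
        simp only [ht, sub_self, zero_smul, add_zero, one_smul]; exact haD
      · have hs1' : s < 1 := lt_of_le_of_ne hs1 hs
        have ht1' : t < 1 := lt_of_le_of_ne ht1 ht
        have hα : 0 < α := div_pos (by nlinarith) h1q
        have hβ : 0 < β := div_pos (by nlinarith) h1q
        have hα1 : α < 1 := by linarith
        obtain ⟨hcF, hdF⟩ := hface c hc d hd α hα hα1 (by
          rw [show (1 : ℝ) - α = β from by linarith, ← hedef]; exact heF)
        exact ⟨memD s hs0 hs1 c hcF, memD t ht0 ht1 d hdF⟩
end

section
/- Let (A, A₊, u_A) be an abstract state space and let f ∈ E_A be a pure effect. If there exists a transformation T : A → A such that u_A ∘ T = f and T(ω) = ω for every ω ∈ F_f, then dim F_f + dim F̄_f ≤ dim Ω_A − 1. -/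
open Set

variable {A : Type*} [NormedAddCommGroup A] [NormedSpace ℝ A] [FiniteDimensional ℝ A]

/-- If a pure effect `f` admits a transformation `T` with `u ∘ T = f` fixing
the certain face `F_f` pointwise, then `dim F_f + dim F̄_f ≤ dim Ω_A - 1`. -/
theorem dim_certainFace_add_dim_impossibleFace_le
    (Apos : Set A) (u : A →ₗ[ℝ] ℝ) (hASS : IsAbstractStateSpace Apos u)
    (f : Module.Dual ℝ A) (hf : IsPureEffect Apos u f)
    (hT : ∃ T : A →ₗ[ℝ] A, IsTransformation Apos u T ∧ (∀ x : A, u (T x) = f x) ∧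
      ∀ ω ∈ certainFace Apos u f, T ω = ω) :
    setDim (certainFace Apos u f) + setDim (impossibleFace Apos u f)
      ≤ setDim (States Apos u) - 1 := by
  classical
  obtain ⟨T, hTtrans, huT, hTfix⟩ := hT
  -- T kills the impossible face
  have hTzero : ∀ ω ∈ impossibleFace Apos u f, T ω = 0 := by
    intro ω hω
    by_contra h
    have h1 : T ω ∈ Apos := hTtrans.1 ω hω.1.1
    have h2 := hASS.unit_pos _ h1 h
    rw [huT, hω.2] at h2
    exact lt_irrefl 0 h2
  -- boundedness and nonemptiness of dimension index sets
  have bdd : ∀ S : Set A,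
      BddAbove {n : ℕ | ∃ p : Fin n → A, (∀ i, p i ∈ S) ∧ AffineIndependent ℝ p} := by
    intro S
    refine ⟨Module.finrank ℝ A + 1, fun n hn => ?_⟩
    obtain ⟨p, _, hp⟩ := hn
    have h1 := hp.card_le_finrank_succ
    have h2 : Module.finrank ℝ (vectorSpan ℝ (Set.range p)) ≤ Module.finrank ℝ A :=
      Submodule.finrank_le _
    simpa using h1.trans (by omega)
  have nonemp : ∀ S : Set A,
      (0 : ℕ) ∈ {n : ℕ | ∃ p : Fin n → A, (∀ i, p i ∈ S) ∧ AffineIndependent ℝ p} := by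
    intro S
    exact ⟨Fin.elim0, fun i => i.elim0, affineIndependent_of_subsingleton ℝ _⟩
  set SF := {n : ℕ | ∃ p : Fin n → A, (∀ i, p i ∈ certainFace Apos u f) ∧ AffineIndependent ℝ p}
    with hSF
  set SG := {n : ℕ | ∃ p : Fin n → A, (∀ i, p i ∈ impossibleFace Apos u f) ∧ AffineIndependent ℝ p}
    with hSG
  set SO := {n : ℕ | ∃ p : Fin n → A, (∀ i, p i ∈ States Apos u) ∧ AffineIndependent ℝ p}
    with hSO
  have hF : sSup SF ∈ SF := Nat.sSup_mem ⟨0, nonemp _⟩ (bdd _)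
  have hG : sSup SG ∈ SG := Nat.sSup_mem ⟨0, nonemp _⟩ (bdd _)
  obtain ⟨p, hpmem, hpind⟩ := hF
  obtain ⟨q, hqmem, hqind⟩ := hG
  -- The combined family is affinely independent
  have hsum : AffineIndependent ℝ (Sum.elim p q) := by
    rw [affineIndependent_iff_of_fintype]
    intro w hw hvs
    rw [Finset.univ.weightedVSub_eq_linear_combination hw] at hvs
    rw [Fintype.sum_sum_type] at hw hvs
    simp only [Sum.elim_inl, Sum.elim_inr] at hvs
    -- apply f
    have hfp : ∀ i, f (p i) = 1 := fun i => (hpmem i).2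
    have hfq : ∀ j, f (q j) = 0 := fun j => (hqmem j).2
    have hfs : ∑ i, w (Sum.inl i) = 0 := by
      have := congrArg f hvs
      simpa [map_add, map_sum, map_smul, hfp, hfq] using this
    -- apply T
    have hTp : ∀ i, T (p i) = p i := fun i => hTfix _ (hpmem i)
    have hTq : ∀ j, T (q j) = 0 := fun j => hTzero _ (hqmem j)
    have hps : ∑ i, w (Sum.inl i) • p i = 0 := by
      have := congrArg T hvs
      simpa [map_add, map_sum, map_smul, hTp, hTq] using this
    have hwl : ∀ i, w (Sum.inl i) = 0 := by
      have := (affineIndependent_iff_of_fintype ℝ p).mp hpind (fun i => w (Sum.inl i)) hfs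
      apply this
      rw [Finset.univ.weightedVSub_eq_linear_combination hfs]
      exact hps
    have hgs : ∑ j, w (Sum.inr j) = 0 := by
      simp [hwl] at hw; exact hw
    have hqs : ∑ j, w (Sum.inr j) • q j = 0 := by
      simp [hwl] at hvs; exact hvs
    have hwr : ∀ j, w (Sum.inr j) = 0 := by
      have := (affineIndependent_iff_of_fintype ℝ q).mp hqind (fun j => w (Sum.inr j)) hgs
      apply this
      rw [Finset.univ.weightedVSub_eq_linear_combination hgs]
      exact hqs
    rintro (i | j)
    · exact hwl i
    · exact hwr j
  have hmemO : sSup SF + sSup SG ∈ SO := by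
    refine ⟨Sum.elim p q ∘ finSumFinEquiv.symm, fun i => ?_, ?_⟩
    · rcases h : finSumFinEquiv.symm i with j | j
      · simpa [h] using (hpmem j).1
      · simpa [h] using (hqmem j).1
    · exact hsum.comp_embedding finSumFinEquiv.symm.toEmbedding
  have hle : sSup SF + sSup SG ≤ sSup SO := le_csSup (bdd _) hmemO
  simp only [setDim, ← hSF, ← hSG, ← hSO]
  have hc : ((sSup SF : ℕ) : ℤ) + (sSup SG : ℕ) ≤ (sSup SO : ℕ) := by exact_mod_cast hle
  omega
end

section
/- Let (A, A₊, u_A) be an abstract state space and let f ∈ E_A be a pure effect. Suppose there exists a transformation T : A → A such that u_A ∘ T = f and T(ω) = ω for every ω ∈ F_f. If the impossible face F̄_f consists of at most one point, then aff(F_f ∪ F̄_f) ∩ Ω_A = conv(F_f ∪ F̄_f). -/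
open Set

variable {A : Type*} [NormedAddCommGroup A] [NormedSpace ℝ A] [FiniteDimensional ℝ A]

/-- If a pure effect `f` admits a transformation `T` with `u ∘ T = f` fixing
`F_f` pointwise, and `F̄_f` has at most one point, then
`aff(F_f ∪ F̄_f) ∩ Ω_A = conv(F_f ∪ F̄_f)`. -/
theorem affineSpan_inter_states_eq_convexHull
    (Apos : Set A) (u : A →ₗ[ℝ] ℝ) (hASS : IsAbstractStateSpace Apos u)
    (f : Module.Dual ℝ A) (hf : IsPureEffect Apos u f)
    (hT : ∃ T : A →ₗ[ℝ] A, IsTransformation Apos u T ∧ (∀ x : A, u (T x) = f x) ∧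
      ∀ ω ∈ certainFace Apos u f, T ω = ω)
    (hsmall : (impossibleFace Apos u f).Subsingleton) :
    (affineSpan ℝ (certainFace Apos u f ∪ impossibleFace Apos u f) : Set A) ∩ States Apos u
      = convexHull ℝ (certainFace Apos u f ∪ impossibleFace Apos u f) := by
  obtain ⟨T, ⟨hTpos, hTnorm⟩, hUT, hTfix⟩ := hT
  set F := certainFace Apos u f with hFdef
  set G := impossibleFace Apos u f with hGdef
  have hΩconv : Convex ℝ (States Apos u) := by
    intro x hx y hy a b ha hb hab
    refine ⟨hASS.add_mem _ (hASS.smul_mem a ha _ hx.1) _ (hASS.smul_mem b hb _ hy.1), ?_⟩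
    simp only [map_add, map_smul, smul_eq_mul, hx.2, hy.2, mul_one]
    linarith
  have hFsub : F ⊆ States Apos u := fun x hx => hx.1
  have hGsub : G ⊆ States Apos u := fun x hx => hx.1
  apply Subset.antisymm
  · rintro ω ⟨hωaff, hωS⟩
    rcases hsmall.eq_empty_or_singleton with hG | ⟨σ, hG⟩
    · -- impossible face empty
      rw [hG, union_empty] at hωaff
      have hfix : T ω = ω := by
        refine affineSpan_induction (p := fun x => T x = x) hωaff (fun x hx => hTfix x hx) ?_
        intro c p₁ p₂ p₃ h1 h2 h3
        simp only [vsub_eq_sub, vadd_eq_add, map_add, map_smul, map_sub, h1, h2, h3]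
      have hfω : f ω = 1 := by rw [← hUT, hfix, hωS.2]
      exact subset_convexHull ℝ _ (Or.inl ⟨hωS, hfω⟩)
    · -- impossible face is {σ}
      have hσG : σ ∈ G := by rw [hG]; exact mem_singleton σ
      have hTσ : T σ = 0 := by
        by_contra h
        have := hASS.unit_pos _ (hTpos σ hσG.1.1) h
        rw [hUT, hσG.2] at this
        exact lt_irrefl 0 this
      -- the key fixed-point identities on the affine span
      have key : (ω = T ω + (1 - u (T ω)) • σ) ∧ T (T ω) = T ω := by
        refine affineSpan_induction
          (p := fun x => (x = T x + (1 - u (T x)) • σ) ∧ T (T x) = T x) hωaff ?_ ?_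
        · rintro x (hx | hx)
          · have h1 : T x = x := hTfix x hx
            constructor
            · rw [h1, hx.1.2]; simp
            · rw [h1, h1]
          · have hx' : x = σ := by rw [hG] at hx; exact hx
            subst hx'
            constructor
            · rw [hTσ]; simp
            · rw [hTσ, map_zero]
        · intro c p₁ p₂ p₃ h1 h2 h3
          constructor
          · simp only [vsub_eq_sub, vadd_eq_add, map_add, map_smul, map_sub, smul_eq_mul]
            conv_lhs => rw [h1.1, h2.1, h3.1]
            module
          · simp only [vsub_eq_sub, vadd_eq_add, map_add, map_smul, map_sub,
              h1.2, h2.2, h3.2]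
      set l := u (T ω) with hl
      have hfω : f ω = l := (hUT ω).symm
      have hfE : f ∈ Effects Apos u := hf.1
      have hl0 : 0 ≤ l := hfω ▸ (hfE ω hωS).1
      have hl1 : l ≤ 1 := hfω ▸ (hfE ω hωS).2
      have hTωpos : T ω ∈ Apos := hTpos ω hωS.1
      rcases eq_or_lt_of_le hl0 with hl0' | hl0'
      · -- l = 0 : ω = σ
        have hTω0 : T ω = 0 := by
          by_contra h
          have := hASS.unit_pos _ hTωpos h
          rw [← hl, ← hl0'] at this
          exact lt_irrefl 0 this
        have : ω = σ := by
          rw [key.1, hTω0, ← hl0']; simp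
        exact subset_convexHull ℝ _ (Or.inr (this ▸ hσG))
      · -- l > 0 : ω = l • τ + (1-l) • σ with τ ∈ F
        set τ := l⁻¹ • T ω with hτ
        have hτpos : τ ∈ Apos := hASS.smul_mem _ (inv_nonneg.mpr hl0) _ hTωpos
        have huτ : u τ = 1 := by
          rw [hτ, map_smul, smul_eq_mul, ← hl, inv_mul_cancel₀ (ne_of_gt hl0')]
        have hfτ : f τ = 1 := by
          rw [← hUT, hτ, map_smul, map_smul, key.2, smul_eq_mul, ← hl,
            inv_mul_cancel₀ (ne_of_gt hl0')]
        have hτF : τ ∈ F := ⟨⟨hτpos, huτ⟩, hfτ⟩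
        have hωeq : ω = l • τ + (1 - l) • σ := by
          rw [hτ, smul_smul, mul_inv_cancel₀ (ne_of_gt hl0'), one_smul]
          exact key.1
        rw [hωeq]
        exact (convex_convexHull ℝ (F ∪ G)) (subset_convexHull ℝ _ (Or.inl hτF))
          (subset_convexHull ℝ _ (Or.inr hσG)) hl0 (by linarith) (by ring)
  · intro x hx
    exact ⟨convexHull_subset_affineSpan _ hx,
      convexHull_min (union_subset hFsub hGsub) hΩconv hx⟩
end

section
/- Let (A, A₊, u_A) be an abstract state space and let F be a minus-face of Ω_A (i.e. a face of Ω_A with dim F = dim Ω_A − 1). Then there exists a unique pure effect f ∈ E_A such that F_f = F. -/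
open Set

variable {A : Type*} [NormedAddCommGroup A] [NormedSpace ℝ A] [FiniteDimensional ℝ A]

open Module

set_option maxHeartbeats 1000000

private lemma setDim_aux {V : Type*} [AddCommGroup V] [Module ℝ V] [FiniteDimensional ℝ V]
    (S : Set V) (hS : S.Nonempty) :
    sSup {n : ℕ | ∃ p : Fin n → V, (∀ i, p i ∈ S) ∧ AffineIndependent ℝ p}
      = finrank ℝ (vectorSpan ℝ S) + 1 := by
  set d := finrank ℝ (vectorSpan ℝ S) with hd
  have hub : ∀ n ∈ {n : ℕ | ∃ p : Fin n → V, (∀ i, p i ∈ S) ∧ AffineIndependent ℝ p},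
      n ≤ d + 1 := by
    rintro n ⟨p, hpS, hpi⟩
    rcases Nat.eq_zero_or_pos n with rfl | hn
    · omega
    · have hc : Fintype.card (Fin n) = (n - 1) + 1 := by simp; omega
      have := hpi.finrank_vectorSpan hc
      have hle : vectorSpan ℝ (Set.range p) ≤ vectorSpan ℝ S :=
        vectorSpan_mono ℝ (Set.range_subset_iff.2 hpS)
      have := Submodule.finrank_mono hle
      omega
  have hmem : d + 1 ∈ {n : ℕ | ∃ p : Fin n → V, (∀ i, p i ∈ S) ∧ AffineIndependent ℝ p} := by
    obtain ⟨t, hts, htspan, htind⟩ := exists_affineIndependent ℝ V S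
    have htfin : t.Finite := finite_set_of_fin_dim_affineIndependent ℝ htind
    haveI htF : Fintype t := htfin.fintype
    have htne : t.Nonempty := by
      by_contra h
      rw [not_nonempty_iff_eq_empty] at h
      subst h
      obtain ⟨x, hx⟩ := hS
      have : x ∈ affineSpan ℝ S := subset_affineSpan ℝ S hx
      rw [← htspan] at this
      rw [AffineSubspace.span_empty] at this
      exact AffineSubspace.notMem_bot ℝ V x this
    haveI htN : Nonempty t := htne.to_subtype
    have hcard : Nat.card t = d + 1 := by
      have h1 : vectorSpan ℝ (Set.range ((↑) : t → V)) = vectorSpan ℝ S := by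
        rw [Subtype.range_coe, ← direction_affineSpan, htspan, direction_affineSpan]
      have h2 := htind.finrank_vectorSpan_add_one
      rw [h1, Fintype.card_eq_nat_card] at h2
      exact h2.symm
    obtain ⟨e⟩ : Nonempty (Fin (d + 1) ≃ t) :=
      ⟨(Fintype.equivFinOfCardEq (by rw [Fintype.card_eq_nat_card]; exact hcard)).symm⟩
    refine ⟨fun i => (e i : V), fun i => hts (e i).2, ?_⟩
    exact htind.comp_embedding e.toEmbedding
  refine le_antisymm (csSup_le ⟨d + 1, hmem⟩ hub) (le_csSup ⟨d + 1, hub⟩ hmem)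

private lemma vectorSpan_le_ker' {V : Type*} [AddCommGroup V] [Module ℝ V]
    (u : V →ₗ[ℝ] ℝ) (S : Set V) (hS : ∀ x ∈ S, u x = 1) :
    vectorSpan ℝ S ≤ LinearMap.ker u := by
  rw [vectorSpan_def, Submodule.span_le]
  rintro v ⟨x, hx, y, hy, rfl⟩
  simp [LinearMap.mem_ker, vsub_eq_sub, map_sub, hS x hx, hS y hy]

private lemma span_finrank' {V : Type*} [AddCommGroup V] [Module ℝ V] [FiniteDimensional ℝ V]
    (u : V →ₗ[ℝ] ℝ) (S : Set V) {p : V} (hp : p ∈ S) (hS : ∀ x ∈ S, u x = 1) :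
    finrank ℝ (Submodule.span ℝ S) = finrank ℝ (vectorSpan ℝ S) + 1 := by
  have hp0 : p ≠ 0 := by
    intro h
    have := hS p hp
    rw [h, map_zero] at this
    norm_num at this
  have hVL : vectorSpan ℝ S ≤ Submodule.span ℝ S := by
    rw [vectorSpan_def, Submodule.span_le]
    rintro v ⟨x, hx, y, hy, rfl⟩
    exact sub_mem (Submodule.subset_span hx) (Submodule.subset_span hy)
  have hsup : vectorSpan ℝ S ⊔ (ℝ ∙ p) = Submodule.span ℝ S := by
    apply le_antisymm
    · exact sup_le hVL ((Submodule.span_le).2 (by simpa using Submodule.subset_span hp))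
    · rw [Submodule.span_le]
      intro x hx
      have h1 : x - p ∈ vectorSpan ℝ S := vsub_mem_vectorSpan ℝ hx hp
      have h2 : x = (x - p) + p := by abel
      rw [h2]
      exact Submodule.add_mem _ (Submodule.mem_sup_left h1)
        (Submodule.mem_sup_right (Submodule.mem_span_singleton_self p))
  have hinf : vectorSpan ℝ S ⊓ (ℝ ∙ p) = ⊥ := by
    rw [Submodule.eq_bot_iff]
    rintro x ⟨hx1, hx2⟩
    obtain ⟨c, rfl⟩ := Submodule.mem_span_singleton.1 hx2
    have := vectorSpan_le_ker' u S hS hx1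
    rw [LinearMap.mem_ker, map_smul, smul_eq_mul, hS p hp, mul_one] at this
    rw [this, zero_smul]
  have := Submodule.finrank_sup_add_finrank_inf_eq (vectorSpan ℝ S) (ℝ ∙ p)
  rw [hsup, hinf, finrank_span_singleton hp0] at this
  simp at this
  omega

/-- Every minus-face `F` of `Ω_A` is the certain face of a unique pure
effect. -/
theorem existsUnique_pureEffect_of_minusFace
    (Apos : Set A) (u : A →ₗ[ℝ] ℝ) (hASS : IsAbstractStateSpace Apos u)
    (F : Set A) (hF : IsMinusFace F (States Apos u)) :
    ∃! f : Module.Dual ℝ A, IsPureEffect Apos u f ∧ certainFace Apos u f = F := by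
  obtain ⟨⟨hFne, hFconv, hFsub, hface⟩, hdim⟩ := hF
  set Ω := States Apos u with hΩdef
  have hΩne : Ω.Nonempty := hFne.mono hFsub
  obtain ⟨p₀, hp₀F⟩ := hFne
  have hp₀Ω : p₀ ∈ Ω := hFsub hp₀F
  have hΩu : ∀ x ∈ Ω, u x = 1 := fun x hx => hx.2
  have hΩpos : ∀ x ∈ Ω, x ∈ Apos := fun x hx => hx.1
  have hΩconv : Convex ℝ Ω := by
    intro x hx y hy a b ha hb hab
    refine ⟨hASS.add_mem _ (hASS.smul_mem a ha x hx.1) _ (hASS.smul_mem b hb y hy.1), ?_⟩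
    simp only [map_add, map_smul, smul_eq_mul, hx.2, hy.2, mul_one]
    linarith
  have hspanΩ : Submodule.span ℝ Ω = ⊤ := by
    rw [eq_top_iff]
    intro x _
    obtain ⟨y, hy, z, hz, rfl⟩ := hASS.generating x
    have key : ∀ w ∈ Apos, w ∈ Submodule.span ℝ Ω := by
      intro w hw
      rcases eq_or_ne w 0 with rfl | hw0
      · exact Submodule.zero_mem _
      · have hu : 0 < u w := hASS.unit_pos w hw hw0
        have hmem : (u w)⁻¹ • w ∈ Ω := by
          refine ⟨hASS.smul_mem _ (by positivity) w hw, ?_⟩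
          simp only [map_smul, smul_eq_mul]
          field_simp
        have h2 := Submodule.smul_mem (Submodule.span ℝ Ω) (u w) (Submodule.subset_span hmem)
        rwa [smul_inv_smul₀ hu.ne'] at h2
    exact sub_mem (key y hy) (key z hz)
  -- dimensions
  have hFne' : F.Nonempty := ⟨p₀, hp₀F⟩
  have hdim' : finrank ℝ (vectorSpan ℝ F) + 1 = finrank ℝ (vectorSpan ℝ Ω) := by
    unfold setDim at hdim
    rw [setDim_aux Ω hΩne, setDim_aux F hFne'] at hdim
    omega
  have hnΩ : finrank ℝ A = finrank ℝ (vectorSpan ℝ Ω) + 1 := by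
    have := span_finrank' u Ω hp₀Ω hΩu
    rwa [hspanΩ, finrank_top] at this
  set L := Submodule.span ℝ F with hLdef
  have hLrank : finrank ℝ L = finrank ℝ (vectorSpan ℝ F) + 1 :=
    span_finrank' u F hp₀F (fun x hx => hΩu x (hFsub hx))
  have hLne : L ≠ ⊤ := by
    intro h
    rw [h, finrank_top] at hLrank
    omega
  -- the face lemma
  have haveA : ∀ x ∈ Ω, x ∈ affineSpan ℝ F → x ∈ F := by
    obtain ⟨t, hts, htspan, htind⟩ := exists_affineIndependent ℝ A F
    haveI htF : Fintype t := (finite_set_of_fin_dim_affineIndependent ℝ htind).fintype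
    have htne : t.Nonempty := by
      by_contra h
      rw [Set.not_nonempty_iff_eq_empty] at h
      subst h
      rw [AffineSubspace.span_empty] at htspan
      exact AffineSubspace.notMem_bot ℝ A p₀ (htspan ▸ subset_affineSpan ℝ F hp₀F)
    haveI : Nonempty t := htne.to_subtype
    intro x hxΩ hxaff
    set k : ℕ := Fintype.card t with hk
    have hk0 : 0 < k := Fintype.card_pos
    have hkR : (0:ℝ) < k := by exact_mod_cast hk0
    have hxaff' : x ∈ affineSpan ℝ (Set.range ((↑) : t → A)) := by
      rwa [Subtype.range_coe, htspan]
    obtain ⟨w, hw1, hwx⟩ := eq_affineCombination_of_mem_affineSpan_of_fintype hxaff'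
    rw [Finset.affineCombination_eq_linear_combination _ _ _ hw1] at hwx
    set C : ℝ := 1 + ∑ i, |w i| with hC
    have hC1 : 1 ≤ ∑ i, |w i| := by
      calc (1:ℝ) = |∑ i, w i| := by rw [hw1]; norm_num
      _ ≤ ∑ i, |w i| := Finset.abs_sum_le_sum_abs _ _
    have hCpos : 1 < C := by rw [hC]; linarith
    set l : ℝ := 1 / (k * C) with hl
    have hkC : (1:ℝ) < k * C := by
      have h1 : (1:ℝ) ≤ k := by exact_mod_cast hk0
      nlinarith
    have hl0 : 0 < l := by rw [hl]; positivity
    have hl1 : l < 1 := by rw [hl, div_lt_one (by linarith)]; linarith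
    have hCne : C ≠ 0 := by linarith
    have hlC : l * C = 1 / k := by
      rw [hl, div_mul_eq_mul_div, one_mul, div_eq_div_iff (by positivity) (by positivity)]
      ring
    set d : t → ℝ := fun i => (1 / k - l * w i) / (1 - l) with hd
    have hd0 : ∀ i, 0 ≤ d i := by
      intro i
      apply div_nonneg _ (by linarith)
      have h1 : |w i| ≤ C := by
        have h2 : |w i| ≤ ∑ j, |w j| :=
          Finset.single_le_sum (f := fun j => |w j|) (fun j _ => abs_nonneg _)
            (Finset.mem_univ i)
        rw [hC]; linarith
      have h2 : l * w i ≤ l * C := by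
        have h3 := le_abs_self (w i)
        nlinarith
      have h4 : l * w i ≤ 1 / (k:ℝ) := by rw [← hlC]; exact h2
      linarith
    have hdsum : ∑ i, d i = 1 := by
      rw [hd]
      simp only
      rw [← Finset.sum_div, Finset.sum_sub_distrib, Finset.sum_const, ← Finset.mul_sum, hw1,
        Finset.card_univ, ← hk, nsmul_eq_mul, mul_one]
      rw [div_eq_one_iff_eq (by linarith)]
      field_simp
    set q : A := ∑ i : t, d i • (i : A) with hq
    have hqF : q ∈ F := hFconv.sum_mem (fun i _ => hd0 i) hdsum (fun i _ => hts i.2)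
    have hzF : (∑ i : t, (1 / (k:ℝ)) • (i : A)) ∈ F := by
      apply hFconv.sum_mem (fun i _ => by positivity) _ (fun i _ => hts i.2)
      rw [Finset.sum_const, Finset.card_univ, ← hk, nsmul_eq_mul]
      field_simp
    have heq : l • x + (1 - l) • q = ∑ i : t, (1 / (k:ℝ)) • (i : A) := by
      rw [hwx, hq, Finset.smul_sum, Finset.smul_sum, ← Finset.sum_add_distrib]
      apply Finset.sum_congr rfl
      intro i _
      rw [smul_smul, smul_smul, ← add_smul]
      congr 1
      have h1l : (1:ℝ) - l ≠ 0 := by linarith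
      show l * w i + (1 - l) * d i = 1 / (k:ℝ)
      rw [hd]
      simp only
      rw [mul_comm ((1:ℝ) - l), div_mul_cancel₀ _ h1l]
      ring
    exact (hface x hxΩ q (hFsub hqF) l hl0 hl1 (heq ▸ hzF)).1
  -- the functional g
  obtain ⟨g, hgne, hLker, hgpos, hMid⟩ :
      ∃ g : Module.Dual ℝ A, g ≠ 0 ∧ L = LinearMap.ker g ∧ (∀ ω ∈ Ω, 0 ≤ g ω) ∧
        (∀ x, g x = 0 → u x = 1 → x ∈ affineSpan ℝ F) := by
    obtain ⟨g, hgne, hgmap⟩ :=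
      Submodule.exists_dual_map_eq_bot_of_lt_top (lt_top_iff_ne_top.2 hLne) inferInstance
    have hgker0 : L ≤ LinearMap.ker g := by
      intro x hx
      rw [LinearMap.mem_ker]
      have h2 : g x ∈ L.map g := ⟨x, hx, rfl⟩
      rwa [hgmap, Submodule.mem_bot] at h2
    have hLker : L = LinearMap.ker g := by
      apply Submodule.eq_of_le_of_finrank_le hgker0
      have hrange : finrank ℝ (LinearMap.range g) = 1 := by
        obtain ⟨x, hx⟩ : ∃ x, g x ≠ 0 := by
          by_contra h
          push_neg at h
          exact hgne (LinearMap.ext fun x => by simp [h x])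
        have hrt : LinearMap.range g = ⊤ := by
          rw [eq_top_iff]
          rintro c -
          exact ⟨(c / g x) • x, by simp [map_smul, smul_eq_mul]; field_simp⟩
        rw [hrt, finrank_top, finrank_self]
      have hrn := LinearMap.finrank_range_add_finrank_ker g
      omega
    -- F spans affine facts
    have hWeq : L ⊓ LinearMap.ker u = vectorSpan ℝ F := by
      have hVL : vectorSpan ℝ F ≤ L := by
        rw [vectorSpan_def, Submodule.span_le]
        rintro v ⟨x, hx, y, hy, rfl⟩
        exact sub_mem (Submodule.subset_span hx) (Submodule.subset_span hy)
      refine (Submodule.eq_of_le_of_finrank_le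
        (le_inf hVL (vectorSpan_le_ker' u F (fun x hx => hΩu x (hFsub hx)))) ?_).symm
      have hlt : L ⊓ LinearMap.ker u < L := by
        refine lt_of_le_of_ne inf_le_left ?_
        intro h
        have hp₀L : p₀ ∈ L := Submodule.subset_span hp₀F
        rw [← h] at hp₀L
        have h3 : u p₀ = 0 := hp₀L.2
        rw [hΩu p₀ hp₀Ω] at h3
        norm_num at h3
      have := Submodule.finrank_lt_finrank_of_lt hlt
      omega
    have hMid : ∀ x, g x = 0 → u x = 1 → x ∈ affineSpan ℝ F := by
      intro x hgx hux
      have hxL : x ∈ L := by rw [hLker]; exact LinearMap.mem_ker.2 hgx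
      have hdiff : x - p₀ ∈ vectorSpan ℝ F := by
        rw [← hWeq]
        rw [Submodule.mem_inf]
        refine ⟨sub_mem hxL (Submodule.subset_span hp₀F), ?_⟩
        rw [LinearMap.mem_ker, map_sub, hux, hΩu p₀ hp₀Ω, sub_self]
      have h4 := AffineSubspace.vadd_mem_of_mem_direction
        (by rwa [direction_affineSpan] : x - p₀ ∈ (affineSpan ℝ F).direction)
        (subset_affineSpan ℝ F hp₀F)
      simpa using h4
    -- sign
    have hsign : (∀ ω ∈ Ω, 0 ≤ g ω) ∨ (∀ ω ∈ Ω, g ω ≤ 0) := by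
      by_contra h
      push_neg at h
      obtain ⟨⟨x, hxΩ, hx⟩, ⟨y, hyΩ, hy⟩⟩ := h
      set l : ℝ := g y / (g y - g x) with hl
      have hne : 0 < g y - g x := by linarith
      have hl0 : 0 < l := by rw [hl]; positivity
      have hl1 : l < 1 := by rw [hl, div_lt_one hne]; linarith
      set z := l • x + (1 - l) • y with hz
      have hzΩ : z ∈ Ω := hΩconv hxΩ hyΩ (le_of_lt hl0) (by linarith) (by ring)
      have hgz : g z = 0 := by
        rw [hz]
        simp only [map_add, map_smul, smul_eq_mul]
        rw [hl]
        field_simp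
        ring
      have hzF : z ∈ F := haveA z hzΩ (hMid z hgz (hΩu z hzΩ))
      have hxF : x ∈ F := (hface x hxΩ y hyΩ l hl0 hl1 hzF).1
      have hxL : x ∈ L := Submodule.subset_span hxF
      rw [hLker, LinearMap.mem_ker] at hxL
      linarith
    rcases hsign with h | h
    · exact ⟨g, hgne, hLker, h, hMid⟩
    · refine ⟨-g, neg_ne_zero.2 hgne, ?_, fun ω hω => by simpa using h ω hω, ?_⟩
      · rw [hLker]
        ext x
        simp [LinearMap.mem_ker, neg_eq_zero]
      · intro x hgx hux
        apply hMid x _ hux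
        simpa [neg_eq_zero] using hgx
  -- compactness of Ω
  have hΩclosed : IsClosed Ω := by
    have heq : Ω = Apos ∩ u ⁻¹' {1} := by
      ext ω
      simp [hΩdef, States, Set.mem_preimage]
    rw [heq]
    exact hASS.closed.inter (isClosed_singleton.preimage u.continuous_of_finiteDimensional)
  have hΩbdd : Bornology.IsBounded Ω := by
    set K := Apos ∩ Metric.sphere (0:A) 1 with hK
    have hKcomp : IsCompact K := (isCompact_sphere 0 1).inter_left hASS.closed
    have hp₀0 : p₀ ≠ 0 := by
      intro h
      have h2 := hΩu p₀ hp₀Ω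
      rw [h, map_zero] at h2
      norm_num at h2
    have hp₀n : (0:ℝ) < ‖p₀‖ := norm_pos_iff.2 hp₀0
    have hKne : K.Nonempty := by
      refine ⟨‖p₀‖⁻¹ • p₀, hASS.smul_mem _ (by positivity) _ (hΩpos p₀ hp₀Ω), ?_⟩
      rw [mem_sphere_zero_iff_norm, norm_smul, norm_inv, norm_norm]
      field_simp
    obtain ⟨x₀, hx₀K, hx₀min⟩ := hKcomp.exists_isMinOn hKne
      u.continuous_of_finiteDimensional.continuousOn
    have hx₀0 : x₀ ≠ 0 := by
      intro h
      have h2 := hx₀K.2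
      rw [h, mem_sphere_zero_iff_norm, norm_zero] at h2
      norm_num at h2
    have hm : 0 < u x₀ := hASS.unit_pos x₀ hx₀K.1 hx₀0
    rw [isBounded_iff_forall_norm_le]
    refine ⟨(u x₀)⁻¹, fun ω hω => ?_⟩
    have hω0 : ω ≠ 0 := by
      intro h
      have h2 := hΩu ω hω
      rw [h, map_zero] at h2
      norm_num at h2
    have hn0 : (0:ℝ) < ‖ω‖ := norm_pos_iff.2 hω0
    have hmem : ‖ω‖⁻¹ • ω ∈ K := by
      refine ⟨hASS.smul_mem _ (by positivity) _ (hΩpos ω hω), ?_⟩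
      rw [mem_sphere_zero_iff_norm, norm_smul, norm_inv, norm_norm]
      field_simp
    have h5 : u x₀ ≤ u (‖ω‖⁻¹ • ω) := isMinOn_iff.mp hx₀min _ hmem
    rw [map_smul, smul_eq_mul, hΩu ω hω, mul_one] at h5
    have h6 : u x₀ * ‖ω‖ ≤ 1 := by
      have := mul_le_mul_of_nonneg_right h5 (le_of_lt hn0)
      rwa [inv_mul_cancel₀ hn0.ne'] at this
    rw [inv_eq_one_div, le_div_iff₀ hm]
    linarith
  have hΩcomp : IsCompact Ω := Metric.isCompact_of_isClosed_isBounded hΩclosed hΩbdd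
  obtain ⟨ω', hω'Ω, hmax'⟩ := hΩcomp.exists_isMaxOn hΩne
    g.continuous_of_finiteDimensional.continuousOn
  have hmax : ∀ ω ∈ Ω, g ω ≤ g ω' := fun ω hω => isMaxOn_iff.mp hmax' ω hω
  set M := g ω' with hM
  have hMpos : 0 < M := by
    obtain ⟨ω₁, hω₁Ω, hω₁⟩ : ∃ ω ∈ Ω, g ω ≠ 0 := by
      by_contra h
      push_neg at h
      apply hgne
      have h2 : Submodule.span ℝ Ω ≤ LinearMap.ker g :=
        Submodule.span_le.2 fun x hx => LinearMap.mem_ker.2 (h x hx)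
      rw [hspanΩ, top_le_iff] at h2
      exact LinearMap.ker_eq_top.1 h2
    have h1 : 0 < g ω₁ := lt_of_le_of_ne (hgpos ω₁ hω₁Ω) (Ne.symm hω₁)
    exact lt_of_lt_of_le h1 (hmax ω₁ hω₁Ω)
  set f : Module.Dual ℝ A := u - M⁻¹ • g with hfdef
  have hfval : ∀ x, f x = u x - M⁻¹ * g x := fun x => by
    rw [hfdef, LinearMap.sub_apply, LinearMap.smul_apply, smul_eq_mul]
  have hfE : f ∈ Effects Apos u := by
    intro ω hω
    have h1 := hgpos ω hω
    have h2 := hmax ω hω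
    rw [hfval, hΩu ω hω]
    constructor
    · have h3 : M⁻¹ * g ω ≤ M⁻¹ * M := mul_le_mul_of_nonneg_left h2 (by positivity)
      rw [inv_mul_cancel₀ hMpos.ne'] at h3
      linarith
    · have h3 : 0 ≤ M⁻¹ * g ω := by positivity
      linarith
  have hF0 : ∀ x ∈ F, g x = 0 := by
    intro x hx
    have h1 : x ∈ L := Submodule.subset_span hx
    rw [hLker, LinearMap.mem_ker] at h1
    exact h1
  have hcf : certainFace Apos u f = F := by
    ext x
    constructor
    · rintro ⟨hxΩ, hfx⟩
      rw [hfval, hΩu x hxΩ] at hfx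
      have hgx : g x = 0 := by
        have h1 : M⁻¹ * g x = 0 := by linarith
        rcases mul_eq_zero.1 h1 with h | h
        · exact absurd h (by positivity)
        · exact h
      exact haveA x hxΩ (hMid x hgx (hΩu x hxΩ))
    · intro hxF
      refine ⟨hFsub hxF, ?_⟩
      rw [hfval, hΩu x (hFsub hxF), hF0 x hxF]
      ring
  have hfω' : f ω' = 0 := by
    rw [hfval, hΩu ω' hω'Ω, ← hM, inv_mul_cancel₀ hMpos.ne', sub_self]
  have haveC : ∀ h : Module.Dual ℝ A, (∀ x ∈ F, h x = 0) → ∃ c : ℝ, h = c • g := by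
    intro h hh
    have hker : LinearMap.ker g ≤ LinearMap.ker h := by
      rw [← hLker, hLdef, Submodule.span_le]
      exact fun x hx => LinearMap.mem_ker.2 (hh x hx)
    refine ⟨h ω' / M, ?_⟩
    ext x
    have hx : x - (g x / M) • ω' ∈ LinearMap.ker g := by
      rw [LinearMap.mem_ker, map_sub, map_smul, smul_eq_mul, ← hM]
      field_simp
      ring
    have h2 := hker hx
    rw [LinearMap.mem_ker, map_sub, map_smul, smul_eq_mul] at h2
    rw [LinearMap.smul_apply, smul_eq_mul]
    have h3 : h x = g x / M * h ω' := by linarith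
    rw [h3]
    ring
  have huE : (u : Module.Dual ℝ A) ∈ Effects Apos u := by
    intro ω hω
    rw [hΩu ω hω]
    norm_num
  have hfF1 : ∀ x ∈ F, f x = 1 := by
    intro x hx
    rw [hfval, hΩu x (hFsub hx), hF0 x hx]
    ring
  have hpure : IsPureEffect Apos u f := by
    refine ⟨hfE, ?_⟩
    intro f₁ hf₁ f₂ hf₂ hseg
    obtain ⟨a, b, ha, hb, hab, hsum⟩ := hseg
    have h1F : ∀ x ∈ F, f₁ x = 1 ∧ f₂ x = 1 := by
      intro x hx
      have e1 := (hf₁ x (hFsub hx)).2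
      have e2 := (hf₂ x (hFsub hx)).2
      have hs := DFunLike.congr_fun hsum x
      rw [LinearMap.add_apply, LinearMap.smul_apply, LinearMap.smul_apply,
        smul_eq_mul, smul_eq_mul, hfF1 x hx] at hs
      constructor <;> nlinarith
    obtain ⟨c₁, hc₁⟩ := haveC (f₁ - f) fun x hx => by
      rw [LinearMap.sub_apply, (h1F x hx).1, hfF1 x hx, sub_self]
    obtain ⟨c₂, hc₂⟩ := haveC (f₂ - f) fun x hx => by
      rw [LinearMap.sub_apply, (h1F x hx).2, hfF1 x hx, sub_self]
    have h₁ω : f₁ ω' = c₁ * M := by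
      have := DFunLike.congr_fun hc₁ ω'
      rw [LinearMap.sub_apply, LinearMap.smul_apply, smul_eq_mul, hfω', ← hM] at this
      linarith
    have h₂ω : f₂ ω' = c₂ * M := by
      have := DFunLike.congr_fun hc₂ ω'
      rw [LinearMap.sub_apply, LinearMap.smul_apply, smul_eq_mul, hfω', ← hM] at this
      linarith
    have hs := DFunLike.congr_fun hsum ω'
    rw [LinearMap.add_apply, LinearMap.smul_apply, LinearMap.smul_apply,
      smul_eq_mul, smul_eq_mul, hfω'] at hs
    have hf₁nn := (hf₁ ω' hω'Ω).1
    have hf₂nn := (hf₂ ω' hω'Ω).1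
    have hf₁0 : f₁ ω' = 0 := by nlinarith
    have hf₂0 : f₂ ω' = 0 := by nlinarith
    have hc₁0 : c₁ = 0 := by
      rw [hf₁0] at h₁ω
      rcases mul_eq_zero.1 h₁ω.symm with h | h
      · exact h
      · exact absurd h hMpos.ne'
    have hc₂0 : c₂ = 0 := by
      rw [hf₂0] at h₂ω
      rcases mul_eq_zero.1 h₂ω.symm with h | h
      · exact h
      · exact absurd h hMpos.ne'
    rw [hc₁0, zero_smul] at hc₁
    rw [hc₂0, zero_smul] at hc₂
    exact sub_eq_zero.1 hc₁
  refine ⟨f, ⟨hpure, hcf⟩, ?_⟩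
  rintro f' ⟨hf'pure, hf'cf⟩
  have hf'E := hf'pure.1
  have hf'F : ∀ x ∈ F, f' x = 1 := by
    intro x hx
    rw [← hf'cf] at hx
    exact hx.2
  obtain ⟨c, hc⟩ := haveC (f' - f) fun x hx => by
    rw [LinearMap.sub_apply, hf'F x hx, hfF1 x hx, sub_self]
  have hf'ω : f' ω' = c * M := by
    have := DFunLike.congr_fun hc ω'
    rw [LinearMap.sub_apply, LinearMap.smul_apply, smul_eq_mul, hfω', ← hM] at this
    linarith
  have hc0 : 0 ≤ c := by
    have h1 := (hf'E ω' hω'Ω).1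
    rw [hf'ω] at h1
    have h2 := div_nonneg h1 hMpos.le
    rwa [mul_div_assoc, div_self hMpos.ne', mul_one] at h2
  rcases eq_or_lt_of_le hc0 with hceq | hclt
  · rw [← hceq, zero_smul] at hc
    exact sub_eq_zero.1 hc
  · have hcM1 : c * M ≤ 1 := by
      have h1 := (hf'E ω' hω'Ω).2
      rwa [hf'ω] at h1
    have hne1 : c * M ≠ 1 := by
      intro h
      have hω'F : ω' ∈ F := by
        rw [← hf'cf]
        exact ⟨hω'Ω, by rw [hf'ω, h]⟩
      have := hF0 ω' hω'F
      rw [← hM] at this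
      rw [this] at hMpos
      exact lt_irrefl 0 hMpos
    have htpos : 0 < c * M := by positivity
    have htlt : c * M < 1 := lt_of_le_of_ne hcM1 hne1
    have hfu : f' ∈ openSegment ℝ f (u : Module.Dual ℝ A) := by
      refine ⟨1 - c * M, c * M, by linarith, htpos, by ring, ?_⟩
      have hf'eq : f' = c • g + f := sub_eq_iff_eq_add.1 hc
      ext x
      rw [LinearMap.add_apply, LinearMap.smul_apply, LinearMap.smul_apply,
        smul_eq_mul, smul_eq_mul, hf'eq]
      rw [LinearMap.add_apply, LinearMap.smul_apply, smul_eq_mul, hfval x]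
      have hMne := hMpos.ne'
      linear_combination (c * g x) * (mul_inv_cancel₀ hMne)
    have := hf'pure.2 hfE huE hfu
    exact this.symm
end

section
/- Let (A, A₊, u_A) be a polytopic theory satisfying the following condition: for every pure effect f ∈ E_A whose certain face F_f is a minus-face of Ω_A, there exists a transformation T : A → A such that u_A ∘ T = f and T(ω) = ω for every ω ∈ F_f. Then Ω_A is a simplex, i.e. (A, A₊, u_A) is a classical theory. -/
open Set

section Helpers

open Submodule Module
set_option linter.unusedSectionVars false
variable {A : Type*} [NormedAddCommGroup A] [NormedSpace ℝ A] [FiniteDimensional ℝ A]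

set_option linter.unusedSectionVars false in
/-- Linear independence implies affine independence. -/
lemma linIndep_affIndep {ι : Type*} {p : ι → A} (h : LinearIndependent ℝ p) :
    AffineIndependent ℝ p := by
  rw [affineIndependent_iff]
  intro s w hw hsum
  exact fun e he => linearIndependent_iff'.mp h s w hsum e he

set_option linter.unusedSectionVars false in
/-- For families in the hyperplane `u = 1`, affine independence implies linear independence. -/
lemma affIndep_linIndep {ι : Type*} {p : ι → A} (u : A →ₗ[ℝ] ℝ) (hu : ∀ i, u (p i) = 1)
    (h : AffineIndependent ℝ p) : LinearIndependent ℝ p := by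
  rw [linearIndependent_iff']
  intro s g hsum i hi
  have hw : s.sum g = 0 := by
    have := congrArg u hsum
    simpa [map_sum, map_smul, hu, smul_eq_mul] using this
  exact affineIndependent_iff.mp h s g hw hsum i hi

/-- A linearly independent family with values in a submodule has size at most its finrank. -/
lemma card_le_finrank_of_mem {m : ℕ} {p : Fin m → A} (Z : Submodule ℝ A)
    (hmem : ∀ i, p i ∈ Z) (h : LinearIndependent ℝ p) : m ≤ finrank ℝ Z := by
  have h' : LinearIndependent ℝ (fun i => (⟨p i, hmem i⟩ : Z)) := by
    apply LinearIndependent.of_comp Z.subtype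
    exact h
  simpa using h'.fintype_card_le_finrank

lemma setDim_eq (u : A →ₗ[ℝ] ℝ) (S : Set A) (hS : ∀ x ∈ S, u x = 1) (m : ℕ)
    (hex : ∃ p : Fin m → A, (∀ i, p i ∈ S) ∧ LinearIndependent ℝ p)
    (hub : ∀ (k : ℕ) (p : Fin k → A), (∀ i, p i ∈ S) → LinearIndependent ℝ p → k ≤ m) :
    setDim S = (m : ℤ) - 1 := by
  have key : sSup {n : ℕ | ∃ p : Fin n → A, (∀ i, p i ∈ S) ∧ AffineIndependent ℝ p} = m := by
    apply le_antisymm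
    · apply csSup_le
      · obtain ⟨p, hp, hli⟩ := hex
        exact ⟨m, p, hp, linIndep_affIndep hli⟩
      · rintro n ⟨p, hp, haff⟩
        exact hub n p hp (affIndep_linIndep u (fun i => hS _ (hp i)) haff)
    · apply le_csSup
      · refine ⟨m, ?_⟩
        rintro n ⟨p, hp, haff⟩
        exact hub n p hp (affIndep_linIndep u (fun i => hS _ (hp i)) haff)
      · obtain ⟨p, hp, hli⟩ := hex
        exact ⟨p, hp, linIndep_affIndep hli⟩
  rw [setDim, key]

lemma finrank_span_range_le {k : ℕ} (p : Fin k → A) :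
    finrank ℝ (span ℝ (Set.range p)) ≤ k := by
  classical
  calc finrank ℝ (span ℝ (Set.range p)) ≤ (Set.range p).toFinset.card := finrank_span_le_card _
  _ ≤ (Finset.univ.image p).card := by
      apply Finset.card_le_card; intro x; simp
  _ ≤ (Finset.univ : Finset (Fin k)).card := Finset.card_image_le
  _ = k := by simp

lemma exists_dual_vanishing (P : Submodule ℝ A) {w : A} (hw : w ∉ P) :
    ∃ h : Module.Dual ℝ A, (∀ x ∈ P, h x = 0) ∧ h w = 1 := by
  have hne : P.mkQ w ≠ 0 := by
    rw [Submodule.mkQ_apply, ne_eq, Submodule.Quotient.mk_eq_zero]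
    exact hw
  obtain ⟨φ, hφ⟩ : ∃ φ : Module.Dual ℝ (A ⧸ P), φ (P.mkQ w) ≠ 0 := by
    by_contra hcon
    push_neg at hcon
    exact hne ((Module.forall_dual_apply_eq_zero_iff ℝ _).mp hcon)
  refine ⟨(φ (P.mkQ w))⁻¹ • (φ.comp P.mkQ), fun x hx => ?_, ?_⟩
  · simp [Submodule.Quotient.mk_eq_zero P |>.mpr hx]
  · rw [Submodule.mkQ_apply] at hφ
    simp [inv_mul_cancel₀ hφ]

end Helpers

section Key

open Submodule Module Set

set_option maxHeartbeats 2000000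

variable {A : Type*} [NormedAddCommGroup A] [NormedSpace ℝ A] [FiniteDimensional ℝ A]

/-- The tilting construction: there is a supporting functional of `conv V` avoiding `v`
whose maximum face contains `finrank A - 1` linearly independent vertices. -/
lemma exists_facet_functional (V : Finset A) (hspan : span ℝ (V : Set A) = ⊤)
    {v : A} (hv : v ∈ V) (g₀ : Module.Dual ℝ A)
    (hg₀ : ∀ w ∈ V, w ≠ v → g₀ v < g₀ w) (hn : 2 ≤ finrank ℝ A) :
    ∃ (g : Module.Dual ℝ A) (M : ℝ) (p : Fin (finrank ℝ A - 1) → A),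
      (∀ w ∈ V, g w ≤ M) ∧ g v < M ∧ (∀ i, p i ∈ V ∧ g (p i) = M) ∧
      LinearIndependent ℝ p := by
  classical
  set n := finrank ℝ A with hnn
  set Good : ℕ → Prop := fun k =>
    ∃ (g : Module.Dual ℝ A) (M : ℝ) (p : Fin k → A),
      (∀ w ∈ V, g w ≤ M) ∧ g v < M ∧ (∀ i, p i ∈ V ∧ g (p i) = M) ∧
      LinearIndependent ℝ p with hGood
  -- V has an element other than v
  have hVother : ∃ w ∈ V, w ≠ v := by
    by_contra hcon
    push_neg at hcon
    have hsub : (V : Set A) ⊆ span ℝ ({v} : Set A) := by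
      intro x hx
      have := hcon x hx
      subst this
      exact subset_span rfl
    have : (⊤ : Submodule ℝ A) ≤ span ℝ ({v} : Set A) := by
      rw [← hspan]; exact span_le.mpr hsub
    have h1 : n ≤ finrank ℝ (span ℝ ({v} : Set A)) := by
      simpa [hnn] using Submodule.finrank_mono (le_antisymm le_top this).ge
    have h2 : finrank ℝ (span ℝ ({v} : Set A)) ≤ 1 := finrank_span_le_card _ |>.trans (by simp)
    omega
  have h0 : Good 0 := by
    obtain ⟨w1, hw1V, hw1ne⟩ := hVother
    have hVne : V.Nonempty := ⟨v, hv⟩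
    obtain ⟨M, hM⟩ := (V.image g₀).max_of_nonempty (hVne.image g₀)
    have hMmem : M ∈ V.image g₀ := Finset.mem_of_max hM
    have hub : ∀ w ∈ V, g₀ w ≤ M := fun w hw =>
      Finset.le_max_of_eq (Finset.mem_image_of_mem g₀ hw) hM
    refine ⟨g₀, M, Fin.elim0, hub, ?_, fun i => i.elim0, linearIndependent_empty_type⟩
    calc g₀ v < g₀ w1 := hg₀ w1 hw1V hw1ne
    _ ≤ M := hub w1 hw1V
  have hbdd : BddAbove {k | Good k} := by
    refine ⟨n, ?_⟩
    rintro k ⟨g, M, p, _, _, _, hli⟩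
    simpa using hli.fintype_card_le_finrank
  set k := sSup {k | Good k} with hk
  have hkG : Good k := Nat.sSup_mem ⟨0, h0⟩ hbdd
  by_cases hbig : n - 1 ≤ k
  · obtain ⟨g, M, p, hub, hlt, hmem, hli⟩ := hkG
    exact ⟨g, M, p ∘ Fin.castLE hbig, hub, hlt, fun i => hmem _,
      hli.comp _ (Fin.castLE_injective hbig)⟩
  · exfalso
    push_neg at hbig
    obtain ⟨g, M, p, hub, hlt, hmem, hli⟩ := hkG
    have hstep : Good (k + 1) := by
      by_cases hcase : ∃ w ∈ V, g w = M ∧ w ∉ span ℝ (Set.range p)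
      · obtain ⟨w, hwV, hwM, hwsp⟩ := hcase
        refine ⟨g, M, Fin.cons w p, hub, hlt, ?_, linearIndependent_fin_cons.mpr ⟨hli, hwsp⟩⟩
        intro i
        refine Fin.cases ?_ ?_ i
        · simpa using ⟨hwV, hwM⟩
        · intro j; simpa using hmem j
      · push_neg at hcase
        set P := span ℝ (Set.range (Fin.cons v p : Fin (k+1) → A)) with hP
        have hvP : v ∈ P := subset_span (by simp [Fin.range_cons])
        have hpP : ∀ i, p i ∈ P := fun i =>
          subset_span (by simp [Fin.range_cons])
        have hPrank : finrank ℝ P ≤ k + 1 := finrank_span_range_le _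
        obtain ⟨w1, hw1V, hw1P⟩ : ∃ w1 ∈ V, w1 ∉ P := by
          by_contra hcon
          push_neg at hcon
          have : (⊤ : Submodule ℝ A) ≤ P := by
            rw [← hspan]; exact span_le.mpr hcon
          have : n ≤ finrank ℝ P := by
            simpa [hnn] using Submodule.finrank_mono (le_antisymm le_top this).ge
          omega
        obtain ⟨h, hhP, hhw1⟩ := exists_dual_vanishing P hw1P
        set S := V.filter (fun w => 0 < h w) with hS
        have hw1S : w1 ∈ S := by
          rw [hS, Finset.mem_filter]
          exact ⟨hw1V, by rw [hhw1]; norm_num⟩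
        obtain ⟨w', hw'S, hminw'⟩ := S.exists_min_image (fun w => (M - g w) / h w) ⟨w1, hw1S⟩
        have hw'V : w' ∈ V := (Finset.mem_filter.mp hw'S).1
        have hw'pos : 0 < h w' := (Finset.mem_filter.mp hw'S).2
        have hw'P : w' ∉ P := fun hin => by
          have := hhP w' hin; linarith
        have hgw' : g w' < M := by
          rcases lt_or_eq_of_le (hub w' hw'V) with h' | h'
          · exact h'
          · exact absurd (span_le.mpr (Set.range_subset_iff.mpr hpP) (hcase w' hw'V h')) hw'P
        set t := (M - g w') / h w' with ht
        have htpos : 0 < t := div_pos (by linarith) hw'pos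
        set g' : Module.Dual ℝ A := g + t • h with hg'
        have hg'app : ∀ x, g' x = g x + t * h x := fun x => by simp [hg', smul_eq_mul]
        refine ⟨g', M, Fin.cons w' p, ?_, ?_, ?_, ?_⟩
        · intro w hw
          rw [hg'app]
          by_cases hpw : 0 < h w
          · have hwS : w ∈ S := Finset.mem_filter.mpr ⟨hw, hpw⟩
            have := hminw' w hwS
            have : t * h w ≤ M - g w := by
              rw [ht]
              calc (M - g w') / h w' * h w ≤ (M - g w) / h w * h w := by
                    apply mul_le_mul_of_nonneg_right this (le_of_lt hpw)
              _ = M - g w := div_mul_cancel₀ _ (ne_of_gt hpw)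
            linarith
          · push_neg at hpw
            have : t * h w ≤ 0 := mul_nonpos_of_nonneg_of_nonpos (le_of_lt htpos) hpw
            have := hub w hw
            linarith
        · rw [hg'app, hhP v hvP]
          simpa using hlt
        · intro i
          refine Fin.cases ?_ ?_ i
          · constructor
            · simpa using hw'V
            · rw [Fin.cons_zero, hg'app, ht, div_mul_cancel₀ _ (ne_of_gt hw'pos)]
              ring
          · intro j
            rw [Fin.cons_succ, hg'app, hhP _ (hpP j)]
            have := hmem j
            exact ⟨this.1, by rw [mul_zero, add_zero, this.2]⟩
        · refine linearIndependent_fin_cons.mpr ⟨hli, fun hin => ?_⟩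
          exact hw'P (span_le.mpr (Set.range_subset_iff.mpr hpP) hin)
    have : k + 1 ≤ k := le_csSup hbdd hstep
    omega

lemma key_effect (Apos : Set A) (u : A →ₗ[ℝ] ℝ) (hASS : IsAbstractStateSpace Apos u)
    (V : Finset A) (hVert : (V : Set A) ⊆ Set.extremePoints ℝ (States Apos u))
    (hconv : States Apos u = convexHull ℝ (V : Set A))
    (hspanV : span ℝ (V : Set A) = ⊤) (hn2 : 2 ≤ finrank ℝ A)
    (hpost : ∀ f : Module.Dual ℝ A, IsPureEffect Apos u f →
      IsMinusFace (certainFace Apos u f) (States Apos u) →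
      ∃ T : A →ₗ[ℝ] A, IsTransformation Apos u T ∧ (∀ x : A, u (T x) = f x) ∧
        ∀ ω ∈ certainFace Apos u f, T ω = ω)
    {v : A} (hv : v ∈ V) :
    ∃ f : Module.Dual ℝ A, f v = 0 ∧ ∀ w ∈ V, w ≠ v → f w = 1 := by
  classical
  set n := finrank ℝ A with hnn
  have hVΩ : (V : Set A) ⊆ States Apos u := by
    rw [hconv]; exact subset_convexHull ℝ _
  have hmemΩ : ∀ x ∈ States Apos u, x ∈ Apos ∧ u x = 1 := fun x hx => hx
  have hu1 : ∀ w ∈ V, u w = 1 := fun w hw => (hVΩ hw).2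
  have hΩconv : Convex ℝ (States Apos u) := by rw [hconv]; exact convex_convexHull ℝ _
  -- v is not in the hull of the other vertices
  have hvnot : v ∉ convexHull ℝ ((V.erase v : Finset A) : Set A) := by
    intro hvC
    have hCΩ : convexHull ℝ ((V.erase v : Finset A) : Set A) ⊆ States Apos u := by
      rw [hconv]
      apply convexHull_mono
      intro x hx
      exact Finset.mem_coe.mpr (Finset.mem_of_mem_erase (Finset.mem_coe.mp hx))
    have hvext : v ∈ Set.extremePoints ℝ (convexHull ℝ ((V.erase v : Finset A) : Set A)) := by
      rw [mem_extremePoints]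
      refine ⟨hvC, fun x₁ h₁ x₂ h₂ hseg => ?_⟩
      exact (mem_extremePoints.mp (hVert hv)).2 x₁ (hCΩ h₁) x₂ (hCΩ h₂) hseg
    have := extremePoints_convexHull_subset hvext
    exact Finset.notMem_erase v V (Finset.mem_coe.mp this)
  -- separating functional
  obtain ⟨g₀, c, hg₀v, hg₀C⟩ := geometric_hahn_banach_point_closed
    (convex_convexHull ℝ _) (((V.erase v).finite_toSet.isCompact_convexHull ℝ).isClosed) hvnot
  have hg₀ : ∀ w ∈ V, w ≠ v → (g₀ : A →ₗ[ℝ] ℝ) v < (g₀ : A →ₗ[ℝ] ℝ) w := by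
    intro w hw hne
    have : w ∈ convexHull ℝ ((V.erase v : Finset A) : Set A) :=
      subset_convexHull ℝ _ (Finset.mem_coe.mpr (Finset.mem_erase.mpr ⟨hne, hw⟩))
    exact lt_trans hg₀v (hg₀C w this)
  obtain ⟨g, M, p, hub, hlt, hpmem, hli⟩ :=
    exists_facet_functional V hspanV hv (g₀ : A →ₗ[ℝ] ℝ) hg₀ hn2
  -- the minimum of g over V
  obtain ⟨w₀, hw₀V, hw₀min⟩ := V.exists_min_image g ⟨v, hv⟩
  set m := g w₀ with hm
  have hgup : ∀ x ∈ States Apos u, g x ≤ M := by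
    rw [hconv]
    intro x hx
    exact convexHull_min (fun w hw => hub w (Finset.mem_coe.mp hw))
      (convex_halfSpace_le (LinearMap.isLinear g) M) hx
  have hglow : ∀ x ∈ States Apos u, m ≤ g x := by
    rw [hconv]
    intro x hx
    exact convexHull_min (fun w hw => hw₀min w (Finset.mem_coe.mp hw))
      (convex_halfSpace_ge (LinearMap.isLinear g) m) hx
  have hmM : m < M := lt_of_le_of_lt (hw₀min v hv) hlt
  have hMm : (0:ℝ) < M - m := by linarith
  -- the effect f
  set f : Module.Dual ℝ A := (M - m)⁻¹ • (g - m • u) with hf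
  have happ : ∀ x, f x = (g x - m * u x) / (M - m) := by
    intro x
    simp [hf, smul_eq_mul, div_eq_inv_mul, LinearMap.sub_apply, LinearMap.smul_apply]
  have happ1 : ∀ x ∈ States Apos u, f x = (g x - m) / (M - m) := by
    intro x hx; rw [happ, (hmemΩ x hx).2, mul_one]
  have hf01 : ∀ ω ∈ States Apos u, 0 ≤ f ω ∧ f ω ≤ 1 := by
    intro ω hω
    rw [happ1 ω hω]
    constructor
    · apply div_nonneg _ (le_of_lt hMm); linarith [hglow ω hω]
    · rw [div_le_one hMm]; linarith [hgup ω hω]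
  have hfone : ∀ ω ∈ States Apos u, (f ω = 1 ↔ g ω = M) := by
    intro ω hω
    rw [happ1 ω hω, div_eq_one_iff_eq (ne_of_gt hMm)]
    constructor <;> intro h <;> linarith
  have hpΩ : ∀ i, p i ∈ States Apos u := fun i => hVΩ (Finset.mem_coe.mpr (hpmem i).1)
  have hfp : ∀ i, f (p i) = 1 := fun i => (hfone _ (hpΩ i)).mpr (hpmem i).2
  have hw₀Ω : w₀ ∈ States Apos u := hVΩ (Finset.mem_coe.mpr hw₀V)
  have hfw₀ : f w₀ = 0 := by rw [happ1 _ hw₀Ω, ← hm, sub_self, zero_div]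
  have hfv1 : f v < 1 := by
    rw [happ1 _ (hVΩ (Finset.mem_coe.mpr hv)), div_lt_one hMm]; linarith
  have hEff : f ∈ Effects Apos u := fun ω hω => hf01 ω hω
  -- w₀ is not in the span of p
  have hw₀span : w₀ ∉ span ℝ (Set.range p) := by
    intro hin
    obtain ⟨cc, hcc⟩ := (mem_span_range_iff_exists_fun ℝ).mp hin
    have h1 : (1:ℝ) = ∑ i, cc i := by
      have := congrArg u hcc
      simp only [map_sum, map_smul, smul_eq_mul] at this
      rw [(hmemΩ w₀ hw₀Ω).2] at this
      rw [← this]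
      exact (Finset.sum_congr rfl fun i _ => by rw [hu1 _ (hpmem i).1, mul_one]).symm
    have h0 : (0:ℝ) = ∑ i, cc i := by
      have := congrArg f hcc
      simp only [map_sum, map_smul, smul_eq_mul] at this
      rw [hfw₀] at this
      rw [← this]
      exact (Finset.sum_congr rfl fun i _ => by rw [hfp i, mul_one]).symm
    linarith
  -- the family q = cons w₀ p is a basis of A
  set q : Fin (n - 1 + 1) → A := Fin.cons w₀ p with hq
  have hqli : LinearIndependent ℝ q := linearIndependent_fin_cons.mpr ⟨hli, hw₀span⟩
  have hqspan : span ℝ (Set.range q) = ⊤ := by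
    apply Submodule.eq_top_of_finrank_eq
    rw [finrank_span_eq_card hqli]
    simp [hnn]
    omega
  have hqΩ : ∀ i, q i ∈ States Apos u := by
    intro i
    refine Fin.cases ?_ ?_ i
    · simpa [hq] using hw₀Ω
    · intro j; simpa [hq] using hpΩ j
  -- purity
  have hpure : IsPureEffect Apos u f := by
    rw [IsPureEffect, mem_extremePoints]
    refine ⟨hEff, fun f₁ h₁ f₂ h₂ hseg => ?_⟩
    obtain ⟨a, b, ha, hb, hab, heq⟩ := hseg
    have hval : ∀ x, a * f₁ x + b * f₂ x = f x := by
      intro x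
      have := congrArg (fun φ : Module.Dual ℝ A => φ x) heq
      simpa [smul_eq_mul] using this
    have hpt1 : ∀ x ∈ States Apos u, f x = 1 → f₁ x = 1 ∧ f₂ x = 1 := by
      intro x hx h1
      have hb₁ := h₁ _ hx
      have hb₂ := h₂ _ hx
      have hsum := hval x
      rw [h1] at hsum
      constructor <;> nlinarith [hb₁.1, hb₂.1, hb₁.2, hb₂.2]
    have hpt0 : ∀ x ∈ States Apos u, f x = 0 → f₁ x = 0 ∧ f₂ x = 0 := by
      intro x hx h1
      have hb₁ := h₁ _ hx
      have hb₂ := h₂ _ hx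
      have hsum := hval x
      rw [h1] at hsum
      constructor <;> nlinarith [hb₁.1, hb₂.1, hb₁.2, hb₂.2]
    have hcases : ∀ i, f (q i) = 0 ∨ f (q i) = 1 := by
      intro i
      refine Fin.cases ?_ ?_ i
      · left; simpa [hq] using hfw₀
      · intro j; right; simpa [hq] using hfp j
    have hkey : ∀ i, f₁ (q i) = f (q i) ∧ f₂ (q i) = f (q i) := by
      intro i
      rcases hcases i with h | h <;> rw [h]
      · exact hpt0 _ (hqΩ i) h
      · exact hpt1 _ (hqΩ i) h
    constructor
    · apply LinearMap.ext_on hqspan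
      rintro x ⟨i, rfl⟩
      exact (hkey i).1
    · apply LinearMap.ext_on hqspan
      rintro x ⟨i, rfl⟩
      exact (hkey i).2
  -- the certain face of f
  set CF := certainFace Apos u f with hCF
  have hCFeq : CF = {ω ∈ States Apos u | f ω = 1} := rfl
  have hp0 : (0 : ℕ) < n - 1 := by omega
  have hminus : IsMinusFace CF (States Apos u) := by
    constructor
    · refine ⟨⟨p ⟨0, hp0⟩, hpΩ _, hfp _⟩, ?_, fun x hx => hx.1, ?_⟩
      · -- convexity
        intro x hx y hy a b ha hb hab
        refine ⟨hΩconv hx.1 hy.1 ha hb hab, ?_⟩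
        have : f (a • x + b • y) = a * f x + b * f y := by
          simp [map_add, map_smul, smul_eq_mul]
        rw [this, hx.2, hy.2]
        linarith
      · -- face property
        intro x hx y hy l hl0 hl1 hmem
        obtain ⟨hmΩ, hm1⟩ := hmem
        have hfx := (hf01 x hx).2
        have hfy := (hf01 y hy).2
        have hsum : l * f x + (1 - l) * f y = 1 := by
          have : f (l • x + (1 - l) • y) = l * f x + (1 - l) * f y := by
            simp [map_add, map_smul, smul_eq_mul]
          rw [← this, hm1]
        have hfx1 : f x = 1 := by nlinarith
        have hfy1 : f y = 1 := by nlinarith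
        exact ⟨⟨hx, hfx1⟩, ⟨hy, hfy1⟩⟩
    · -- dimension count
      have hdimΩ : setDim (States Apos u) = ((n - 1 + 1 : ℕ) : ℤ) - 1 := by
        apply setDim_eq u _ (fun x hx => (hmemΩ x hx).2)
        · exact ⟨q, hqΩ, hqli⟩
        · intro k pp _ hppli
          have := hppli.fintype_card_le_finrank
          simp at this
          omega
      have hdimCF : setDim CF = ((n - 1 : ℕ) : ℤ) - 1 := by
        apply setDim_eq u _ (fun x hx => (hmemΩ x hx.1).2)
        · exact ⟨p, fun i => ⟨hpΩ i, hfp i⟩, hli⟩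
        · intro k pp hpp hppli
          have hker : ∀ i, pp i ∈ LinearMap.ker (u - f) := by
            intro i
            have h1 := (hmemΩ _ (hpp i).1).2
            have h2 := (hpp i).2
            simp [LinearMap.mem_ker, LinearMap.sub_apply, h1, h2]
          have hne : u - f ≠ 0 := by
            intro hcon
            have : (u - f) w₀ = 0 := by rw [hcon]; rfl
            rw [LinearMap.sub_apply, (hmemΩ _ hw₀Ω).2, hfw₀] at this
            linarith
          have hrange : LinearMap.range (u - f) = ⊤ := by
            rw [LinearMap.range_eq_top]
            intro r
            refine ⟨r • w₀, ?_⟩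
            rw [map_smul, LinearMap.sub_apply, (hmemΩ _ hw₀Ω).2, hfw₀, smul_eq_mul]
            ring
          have hkerrank : finrank ℝ (LinearMap.ker (u - f)) = n - 1 := by
            have := LinearMap.finrank_range_add_finrank_ker (u - f)
            rw [hrange] at this
            simp [finrank_top] at this
            omega
          have := card_le_finrank_of_mem _ hker hppli
          omega
      rw [hdimΩ, hdimCF]
      push_cast
      omega
  -- apply the postulate
  obtain ⟨T, ⟨hTpos, hTnorm⟩, hTu, hTfix⟩ := hpost f hpure hminus
  -- T is the identity on the span of p
  have hTid : ∀ x ∈ span ℝ (Set.range p), T x = x := by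
    intro x hx
    have := LinearMap.eqOn_span (f := T) (g := LinearMap.id (R := ℝ) (M := A))
      (s := Set.range p) ?_ hx
    · simpa using this
    · rintro y ⟨i, rfl⟩
      simpa using hTfix (p i) ⟨hpΩ i, hfp i⟩
  have hspanker : span ℝ (Set.range p) = LinearMap.ker (u - f) := by
    apply Submodule.eq_of_le_of_finrank_le
    · rw [span_le]
      rintro y ⟨i, rfl⟩
      simp [LinearMap.mem_ker, LinearMap.sub_apply, (hmemΩ _ (hpΩ i)).2, hfp i]
    · have hle : finrank ℝ (LinearMap.ker (u - f)) ≤ n - 1 := by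
        have hne : u - f ≠ 0 := by
          intro hcon
          have : (u - f) w₀ = 0 := by rw [hcon]; rfl
          rw [LinearMap.sub_apply, (hmemΩ _ hw₀Ω).2, hfw₀] at this
          linarith
        have hrange : LinearMap.range (u - f) = ⊤ := by
          rw [LinearMap.range_eq_top]
          intro r
          refine ⟨r • w₀, ?_⟩
          rw [map_smul, LinearMap.sub_apply, (hmemΩ _ hw₀Ω).2, hfw₀, smul_eq_mul]
          ring
        have := LinearMap.finrank_range_add_finrank_ker (u - f)
        rw [hrange] at this
        simp [finrank_top] at this
        omega
      rw [finrank_span_eq_card hli]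
      simpa using hle
  have hTker : ∀ x, u x = f x → T x = x := by
    intro x hx
    apply hTid
    rw [hspanker]
    simp [LinearMap.mem_ker, LinearMap.sub_apply, hx]
  -- T w₀ = 0
  have hTw₀ : T w₀ = 0 := by
    have hpos : T w₀ ∈ Apos := hTpos w₀ (hmemΩ _ hw₀Ω).1
    have hu0 : u (T w₀) = 0 := by rw [hTu, hfw₀]
    by_contra hne
    exact absurd hu0 (ne_of_gt (hASS.unit_pos _ hpos hne))
  -- explicit form of T
  have hTform : ∀ x, T x = x - (u x - f x) • w₀ := by
    intro x
    have hy : T (x - (u x - f x) • w₀) = x - (u x - f x) • w₀ := by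
      apply hTker
      rw [map_sub, map_sub, map_smul, map_smul, smul_eq_mul, smul_eq_mul,
        (hmemΩ _ hw₀Ω).2, hfw₀]
      ring
    have : T x = T (x - (u x - f x) • w₀) + (u x - f x) • T w₀ := by
      rw [map_sub, map_smul]
      abel
    rw [this, hTw₀, smul_zero, add_zero, hy]
  -- every vertex with f < 1 equals w₀ and has f = 0
  have claim1 : ∀ w ∈ V, f w < 1 → w = w₀ ∧ f w = 0 := by
    intro w hwV hlt1
    have hwΩ : w ∈ States Apos u := hVΩ (Finset.mem_coe.mpr hwV)
    have hfw0 := (hf01 w hwΩ).1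
    have hTw : T w = w - (1 - f w) • w₀ := by
      rw [hTform, (hmemΩ _ hwΩ).2]
    rcases eq_or_lt_of_le hfw0 with h0 | hpos
    · -- f w = 0 : T w = w - w₀ is in the cone with u = 0, so w = w₀
      have hTw' : T w = w - w₀ := by rw [hTw, ← h0]; simp
      have hmem : T w ∈ Apos := hTpos w (hmemΩ _ hwΩ).1
      have hu0 : u (T w) = 0 := by rw [hTu, ← h0]
      have : T w = 0 := by
        by_contra hne
        exact absurd hu0 (ne_of_gt (hASS.unit_pos _ hmem hne))
      rw [hTw'] at this
      exact ⟨by rwa [sub_eq_zero] at this, h0.symm⟩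
    · -- 0 < f w < 1 : w is a proper mixture of two states, contradicting extremality
      exfalso
      set α := f w with hα
      have hTwA : T w ∈ Apos := hTpos w (hmemΩ _ hwΩ).1
      have huTw : u (T w) = α := by rw [hTu]
      set ω₁ := α⁻¹ • T w with hω₁
      have hω₁Ω : ω₁ ∈ States Apos u := by
        refine ⟨hASS.smul_mem _ (le_of_lt (inv_pos.mpr hpos)) _ hTwA, ?_⟩
        rw [hω₁, map_smul, huTw, smul_eq_mul, inv_mul_cancel₀ (ne_of_gt hpos)]
      have hseg : w ∈ openSegment ℝ ω₁ w₀ := by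
        refine ⟨α, 1 - α, hpos, by linarith, by ring, ?_⟩
        rw [hω₁, smul_smul, mul_inv_cancel₀ (ne_of_gt hpos), one_smul, hTw]
        abel
      have hext := (mem_extremePoints.mp (hVert (Finset.mem_coe.mpr hwV))).2
        ω₁ hω₁Ω w₀ hw₀Ω hseg
      have hww₀ : w₀ = w := hext.2
      rw [← hww₀] at hα
      rw [hfw₀] at hα
      exact absurd hα.symm (ne_of_gt hpos : α ≠ 0).symm
  -- conclusion
  have hfv0 : f v = 0 := (claim1 v hv hfv1).2
  have hvw₀ : v = w₀ := (claim1 v hv hfv1).1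
  refine ⟨f, hfv0, fun w hwV hne => ?_⟩
  by_contra hcon
  have hlt : f w < 1 := lt_of_le_of_ne (hf01 w (hVΩ (Finset.mem_coe.mpr hwV))).2 hcon
  exact hne ((claim1 w hwV hlt).1.trans hvw₀.symm)


end Key


section Main

open Submodule Module Set

set_option maxHeartbeats 1000000

variable {A : Type*} [NormedAddCommGroup A] [NormedSpace ℝ A] [FiniteDimensional ℝ A]

/-- A polytopic theory satisfying the postulate (for pure effects whose
certain face is a minus-face) is classical, i.e. `Ω_A` is a simplex. -/
theorem polytopic_theory_is_classical
    (Apos : Set A) (u : A →ₗ[ℝ] ℝ) (hASS : IsAbstractStateSpace Apos u)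
    (hpoly : IsPolytope (States Apos u))
    (hpost : ∀ f : Module.Dual ℝ A, IsPureEffect Apos u f →
      IsMinusFace (certainFace Apos u f) (States Apos u) →
      ∃ T : A →ₗ[ℝ] A, IsTransformation Apos u T ∧ (∀ x : A, u (T x) = f x) ∧
        ∀ ω ∈ certainFace Apos u f, T ω = ω) :
    IsSimplex (States Apos u) := by
  classical
  obtain ⟨t, ht⟩ := hpoly
  by_cases hne : (States Apos u).Nonempty
  · -- the set of extreme points of the states
    have hΩcomp : IsCompact (States Apos u) := by
      rw [ht]; exact t.finite_toSet.isCompact_convexHull ℝ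
    have hΩconv : Convex ℝ (States Apos u) := by
      rw [ht]; exact convex_convexHull ℝ _
    have hextsub : Set.extremePoints ℝ (States Apos u) ⊆ (t : Set A) := by
      rw [ht]; exact extremePoints_convexHull_subset
    have hextfin : (Set.extremePoints ℝ (States Apos u)).Finite :=
      t.finite_toSet.subset hextsub
    set V : Finset A := hextfin.toFinset with hV
    have hVcoe : (V : Set A) = Set.extremePoints ℝ (States Apos u) := hextfin.coe_toFinset
    have hconv : States Apos u = convexHull ℝ (V : Set A) := by
      rw [hVcoe]
      have hclosed : IsClosed (convexHull ℝ (Set.extremePoints ℝ (States Apos u))) :=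
        (hextfin.isCompact_convexHull ℝ).isClosed
      calc States Apos u
          = closure (convexHull ℝ (Set.extremePoints ℝ (States Apos u))) :=
            (closure_convexHull_extremePoints hΩcomp hΩconv).symm
        _ = convexHull ℝ (Set.extremePoints ℝ (States Apos u)) := hclosed.closure_eq
    have hVert : (V : Set A) ⊆ Set.extremePoints ℝ (States Apos u) := hVcoe.subset
    -- the states span A
    obtain ⟨ω₀, hω₀⟩ := hne
    have hAposspan : Apos ⊆ (span ℝ (States Apos u) : Set A) := by
      intro y hy
      by_cases hy0 : y = 0
      · rw [hy0]; exact (span ℝ (States Apos u)).zero_mem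
      · have hupos : 0 < u y := hASS.unit_pos y hy hy0
        have hmem : (u y)⁻¹ • y ∈ States Apos u := by
          refine ⟨hASS.smul_mem _ (le_of_lt (inv_pos.mpr hupos)) _ hy, ?_⟩
          rw [map_smul, smul_eq_mul, inv_mul_cancel₀ (ne_of_gt hupos)]
        have : y = (u y) • ((u y)⁻¹ • y) := by
          rw [smul_smul, mul_inv_cancel₀ (ne_of_gt hupos), one_smul]
        rw [this]
        exact (span ℝ (States Apos u)).smul_mem _ (subset_span hmem)
    have hspanΩ : span ℝ (States Apos u) = ⊤ := by
      rw [eq_top_iff]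
      intro x _
      obtain ⟨y, hy, z, hz, hxyz⟩ := hASS.generating x
      rw [hxyz]
      exact sub_mem (hAposspan hy) (hAposspan hz)
    have hspanV : span ℝ (V : Set A) = ⊤ := by
      rw [eq_top_iff, ← hspanΩ]
      apply span_le.mpr
      intro x hx
      rw [hconv] at hx
      refine convexHull_min ?_ (span ℝ (V : Set A)).convex hx
      exact subset_span
    have hA1 : 1 ≤ finrank ℝ A := by
      have : ω₀ ≠ 0 := by
        intro h
        have h2 := hω₀.2
        rw [h, map_zero] at h2
        exact one_ne_zero h2.symm
      have : Nontrivial A := ⟨ω₀, 0, this⟩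
      exact Module.finrank_pos
    by_cases hA2 : 2 ≤ finrank ℝ A
    · -- main case: apply the key effect construction to each vertex
      have hkey : ∀ v ∈ V, ∃ f : Module.Dual ℝ A, f v = 0 ∧ ∀ w ∈ V, w ≠ v → f w = 1 :=
        fun v hv => key_effect Apos u hASS V hVert hconv hspanV hA2 hpost hv
      choose e he0 he1 using hkey
      refine ⟨V, ?_, hconv⟩
      apply linIndep_affIndep
      rw [linearIndependent_iff']
      intro s cc hsum i₀ hi₀
      have hiV : (i₀ : A) ∈ V := i₀.2
      have hu1 : ∀ i : ↥(V : Set A), u (i : A) = 1 := by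
        intro i
        have : (i : A) ∈ States Apos u := by
          rw [hconv]; exact subset_convexHull ℝ _ i.2
        exact this.2
      have husum : ∑ i ∈ s, cc i = 0 := by
        have := congrArg u hsum
        simp only [map_sum, map_smul, smul_eq_mul, map_zero] at this
        rw [← this]
        exact (Finset.sum_congr rfl fun i _ => by rw [hu1 i, mul_one]).symm
      have hesum : ∑ i ∈ s, cc i * (e (i₀ : A) hiV) (i : A) = 0 := by
        have := congrArg (e (i₀ : A) hiV) hsum
        simpa only [map_sum, map_smul, smul_eq_mul, map_zero] using this
      have hsplit : ∀ i ∈ s, cc i * (e (i₀ : A) hiV) (i : A)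
          = cc i - (if i = i₀ then cc i else 0) := by
        intro i _
        by_cases hii : i = i₀
        · subst hii
          rw [he0 (i : A) hiV]
          simp
        · have hne : (i : A) ≠ (i₀ : A) := fun h => hii (Subtype.ext h)
          rw [he1 (i₀ : A) hiV (i : A) i.2 hne]
          simp [hii]
      rw [Finset.sum_congr rfl hsplit, Finset.sum_sub_distrib, husum,
        Finset.sum_ite_eq' s i₀ cc, if_pos hi₀] at hesum
      linarith
    · -- dimension 1: the state space is a single point
      have hA1' : finrank ℝ A = 1 := by omega
      have hsingle : States Apos u = {ω₀} := by
        apply Set.eq_singleton_iff_unique_mem.mpr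
        refine ⟨hω₀, fun ω hω => ?_⟩
        have hker : ω - ω₀ ∈ LinearMap.ker u := by
          simp [LinearMap.mem_ker, map_sub, hω.2, hω₀.2]
        have hune : u ≠ 0 := by
          intro h
          have h2 := hω₀.2
          rw [h] at h2
          simp at h2
        have hrange : LinearMap.range u = ⊤ := by
          rw [LinearMap.range_eq_top]
          intro r
          exact ⟨r • ω₀, by rw [map_smul, hω₀.2, smul_eq_mul, mul_one]⟩
        have hkerbot : LinearMap.ker u = ⊥ := by
          have h1 := LinearMap.finrank_range_add_finrank_ker u
          rw [hrange, finrank_top, Module.finrank_self, hA1'] at h1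
          exact Submodule.finrank_eq_zero.mp (by omega)
        rw [hkerbot, Submodule.mem_bot, sub_eq_zero] at hker
        exact hker
      refine ⟨{ω₀}, ?_, by rw [hsingle]; simp⟩
      have hsub : Subsingleton ↥(({ω₀} : Finset A) : Set A) := by
        constructor
        intro a b
        apply Subtype.ext
        have ha := a.2
        have hb := b.2
        simp at ha hb
        rw [ha, hb]
      exact affineIndependent_of_subsingleton ℝ _
  · -- the empty state space is the empty simplex
    rw [Set.not_nonempty_iff_eq_empty] at hne
    refine ⟨∅, ?_, by simp [hne]⟩
    have hsub : Subsingleton ↥((∅ : Finset A) : Set A) := by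
      constructor
      intro a b
      exact absurd a.2 (by simp)
    exact affineIndependent_of_subsingleton ℝ _

end Main
end

section
/- Let (A, A₊, u_A) be a polytopic theory satisfying the following condition: for every pure effect f ∈ E_A whose certain face F_f is a minus-face of Ω_A, there exists a transformation T : A → A such that u_A ∘ T = f and T(ω) = ω for every ω ∈ F_f. Then the polytope Ω_A is uniformly pyramidal: for every minus-face F of Ω_A there exists a point a_F ∈ Ω_A with a_F ∉ aff(F) such that Ω_A = conv(F ∪ {a_F}). -/
open Set

section Aux1

variable {V : Type*} [AddCommGroup V] [Module ℝ V]

/-- The index set whose sSup appears in `setDim`. -/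
def auxDimSet (S : Set V) : Set ℕ :=
  {n : ℕ | ∃ p : Fin n → V, (∀ i, p i ∈ S) ∧ AffineIndependent ℝ p}

lemma aux_setDim (S : Set V) :
    setDim S = ((sSup (auxDimSet S) : ℕ) : ℤ) - 1 := rfl

lemma aux_zero_mem (S : Set V) : 0 ∈ auxDimSet S :=
  ⟨Fin.elim0, fun i => i.elim0, affineIndependent_of_subsingleton ℝ _⟩

lemma aux_one_mem {S : Set V} (h : S.Nonempty) : 1 ∈ auxDimSet S := by
  obtain ⟨x, hx⟩ := h
  exact ⟨fun _ => x, fun _ => hx, affineIndependent_of_subsingleton ℝ _⟩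

lemma aux_linIndep_affIndep {m : ℕ} {p : Fin m → V} (h : LinearIndependent ℝ p) :
    AffineIndependent ℝ p := by
  rw [affineIndependent_iff]
  intro s w _ hsum
  exact linearIndependent_iff'.1 h s w hsum

end Aux1

section Aux2

variable {A : Type*} [NormedAddCommGroup A] [NormedSpace ℝ A]

lemma aux_affIndep_linIndep (u : A →ₗ[ℝ] ℝ) {m : ℕ} {p : Fin m → A}
    (hp : AffineIndependent ℝ p) (h1 : ∀ i, u (p i) = 1) : LinearIndependent ℝ p := by
  rw [linearIndependent_iff']
  intro s w hsum
  have hw0 : ∑ i ∈ s, w i = 0 := by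
    have h2 := congrArg u hsum
    simp only [map_sum, map_smul, h1, smul_eq_mul, mul_one, map_zero] at h2
    exact h2
  exact affineIndependent_iff.1 hp s w hw0 hsum

variable [FiniteDimensional ℝ A]

lemma aux_bddAbove {S : Set A} (u : A →ₗ[ℝ] ℝ) (hS : ∀ x ∈ S, u x = 1) :
    ∀ m ∈ auxDimSet S, m ≤ Module.finrank ℝ A := by
  rintro m ⟨p, hpS, hpA⟩
  have := (aux_affIndep_linIndep u hpA fun i => hS _ (hpS i)).fintype_card_le_finrank
  simpa using this

/-- extraction of a linearly independent family of size `finrank (span S)` from `S`. -/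
lemma aux_extract (S : Set A) :
    ∃ p : Fin (Module.finrank ℝ (Submodule.span ℝ S)) → A,
      (∀ i, p i ∈ S) ∧ LinearIndependent ℝ p := by
  obtain ⟨b, hbS, hbspan, hbli⟩ := exists_linearIndependent ℝ S
  have hfin : b.Finite := by
    have := hbli.lt_aleph0_of_finite (R := ℝ) (M := A)
    rw [Cardinal.lt_aleph0_iff_set_finite] at this
    exact this
  haveI := hfin.fintype
  have hcard : Module.finrank ℝ (Submodule.span ℝ S) = b.toFinset.card := by
    rw [← hbspan]
    exact finrank_span_set_eq_card hbli
  rw [Set.toFinset_card] at hcard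
  obtain e := Fintype.equivFinOfCardEq hcard.symm
  exact ⟨fun i => (e.symm i : A), fun i => hbS (e.symm i).2,
    hbli.comp e.symm e.symm.injective⟩

end Aux2

section Aux3

variable {A : Type*} [NormedAddCommGroup A] [NormedSpace ℝ A] [FiniteDimensional ℝ A]

lemma aux_mem_affineSpan {S : Set A} (u : A →ₗ[ℝ] ℝ) (hS : ∀ y ∈ S, u y = 1)
    {x : A} (hx : x ∈ Submodule.span ℝ S) (hux : u x = 1) : x ∈ affineSpan ℝ S := by
  classical
  obtain ⟨c, hsupp, hsum⟩ := Submodule.mem_span_set.1 hx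
  rw [Finsupp.sum] at hsum
  have hw1 : ∑ i ∈ c.support.attach, c i.1 = 1 := by
    rw [Finset.sum_attach c.support (fun i => c i)]
    have h2 := congrArg u hsum
    simp only [map_sum, map_smul, smul_eq_mul] at h2
    calc ∑ i ∈ c.support, c i = ∑ i ∈ c.support, c i * u i := by
          refine Finset.sum_congr rfl fun i hi => ?_
          rw [hS i (hsupp hi), mul_one]
      _ = 1 := by rw [h2, hux]
  have key := affineCombination_mem_affineSpan hw1
      (fun i : {y : A // y ∈ c.support} => (i : A))
  rw [Finset.affineCombination_eq_linear_combination _ _ _ hw1] at key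
  have hx' : ∑ i ∈ c.support.attach, c i.1 • (i.1 : A) = x := by
    rw [Finset.sum_attach c.support (fun i => c i • i)]; exact hsum
  rw [hx'] at key
  have hrange : Set.range (fun i : {y : A // y ∈ c.support} => (i : A)) ⊆ S := by
    rintro _ ⟨i, rfl⟩; exact hsupp i.2
  exact affineSpan_mono ℝ hrange key

lemma aux_face_affineSpan {C F : Set A} (u : A →ₗ[ℝ] ℝ) (hC : ∀ y ∈ C, u y = 1)
    (hF : IsFaceOf F C) {x : A} (hxC : x ∈ C) (hx : x ∈ affineSpan ℝ F) : x ∈ F := by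
  classical
  obtain ⟨hFne, hFconv, hFC, habs⟩ := hF
  set k := sSup (auxDimSet F) with hk
  have hbdd : BddAbove (auxDimSet F) :=
    ⟨Module.finrank ℝ A, fun m hm => aux_bddAbove u (fun y hy => hC y (hFC hy)) m hm⟩
  obtain ⟨p, hpF, hpA⟩ : k ∈ auxDimSet F := Nat.sSup_mem ⟨0, aux_zero_mem F⟩ hbdd
  have hk1 : 1 ≤ k := le_csSup hbdd (aux_one_mem hFne)
  -- maximality of p
  have hFspan : F ⊆ ↑(affineSpan ℝ (Set.range p)) := by
    intro q hq
    by_contra hq'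
    set p' : Fin (k + 1) → A := Fin.cons q p with hp'
    have hcons : ∀ (y : Fin (k+1)) (hy : y ≠ 0), (Fin.cons q p : Fin (k+1) → A) y = p (y.pred hy) := by
      intro y hy
      conv_lhs => rw [← Fin.succ_pred y hy]
      rw [Fin.cons_succ]
    have himg : p' '' {y : Fin (k+1) | y ≠ 0} = Set.range p := by
      ext z
      constructor
      · rintro ⟨y, hy, rfl⟩
        refine ⟨y.pred hy, ?_⟩
        rw [hp', hcons y hy]
      · rintro ⟨i, rfl⟩
        exact ⟨i.succ, Fin.succ_ne_zero i, by rw [hp', Fin.cons_succ]⟩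
    have hsub : AffineIndependent ℝ (fun i : {y : Fin (k+1) // y ≠ 0} => p' i) := by
      have hinj : Function.Injective (fun y : {y : Fin (k+1) // y ≠ 0} => y.1.pred y.2) := by
        intro a b hab
        apply Subtype.ext
        have h2 := congrArg Fin.succ hab
        rwa [Fin.succ_pred, Fin.succ_pred] at h2
      have := hpA.comp_embedding ⟨fun y : {y : Fin (k+1) // y ≠ 0} => y.1.pred y.2, hinj⟩
      convert this using 1
      · rfl
      funext y
      simp only [Function.comp, Function.Embedding.coeFn_mk, hp']
      rw [hcons y.1 y.2]
    have hi0 : p' 0 ∉ affineSpan ℝ (p' '' {y : Fin (k+1) | y ≠ 0}) := by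
      rw [himg, hp']
      simpa using hq'
    have hA' : AffineIndependent ℝ p' := hsub.affineIndependent_of_notMem_span hi0
    have hmem : k + 1 ∈ auxDimSet F := by
      refine ⟨p', fun i => ?_, hA'⟩
      refine Fin.cases ?_ (fun j => ?_) i
      · rw [hp']; simpa using hq
      · rw [hp', Fin.cons_succ]; exact hpF j
    have := le_csSup hbdd hmem
    omega
  have hx' : x ∈ affineSpan ℝ (Set.range p) := (affineSpan_le.2 hFspan) hx
  obtain ⟨s, w, hw1, hxw⟩ := eq_affineCombination_of_mem_affineSpan hx'
  rw [Finset.affineCombination_indicator_subset w p s.subset_univ] at hxw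
  set c : Fin k → ℝ := Set.indicator ↑s w with hcdef
  have hc1 : ∑ i, c i = 1 := by
    rw [hcdef, Finset.sum_indicator_subset w s.subset_univ, hw1]
  have hxl : x = ∑ i, c i • p i := by
    rw [hxw, Finset.affineCombination_eq_linear_combination _ _ _ hc1]
  -- choose epsilon
  set B : ℝ := (∑ i, |c i|) + 1 with hB
  have hBpos : 0 < B := by
    have : (0:ℝ) ≤ ∑ i, |c i| := Finset.sum_nonneg fun i _ => abs_nonneg _
    linarith
  have hcB : ∀ i, c i ≤ B := by
    intro i
    have h1 : |c i| ≤ ∑ j, |c j| :=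
      Finset.single_le_sum (fun j _ => abs_nonneg (c j)) (Finset.mem_univ i)
    have := le_abs_self (c i)
    linarith
  have hkR : (0:ℝ) < (k:ℝ) := by exact_mod_cast hk1
  set ε : ℝ := 1 / ((k:ℝ) * B) with hε
  have hεpos : 0 < ε := by positivity
  have hεB : ε * B = 1 / (k:ℝ) := by
    rw [hε]; field_simp
  set w' : Fin k → ℝ := fun i => (1 + ε) / (k:ℝ) - ε * c i with hw'
  have hw'0 : ∀ i, 0 ≤ w' i := by
    intro i
    have h1 : ε * c i ≤ ε * B := by nlinarith [hcB i]
    rw [hεB] at h1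
    have h3 : (1:ℝ)/(k:ℝ) ≤ (1+ε)/(k:ℝ) := by gcongr; linarith
    have : w' i = (1 + ε) / (k:ℝ) - ε * c i := rfl
    rw [this]
    linarith
  have hw'1 : ∑ i, w' i = 1 := by
    rw [hw']
    rw [Finset.sum_sub_distrib]
    rw [Finset.sum_const, ← Finset.mul_sum, hc1]
    simp only [Finset.card_univ, Fintype.card_fin, nsmul_eq_mul]
    field_simp
    ring
  set z : A := ∑ i, w' i • p i with hz
  set y : A := ∑ i, ((k:ℝ)⁻¹) • p i with hy
  have hrangeF : Set.range p ⊆ F := by rintro _ ⟨i, rfl⟩; exact hpF i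
  have hconvF : convexHull ℝ (Set.range p) ⊆ F := convexHull_min hrangeF hFconv
  have hzF : z ∈ F := by
    apply hconvF
    have := affineCombination_mem_convexHull (fun i _ => hw'0 i) hw'1 (v := p)
    rwa [Finset.affineCombination_eq_linear_combination _ _ _ hw'1] at this
  have hyweights : ∑ i : Fin k, ((k:ℝ)⁻¹) = 1 := by
    rw [Finset.sum_const]
    simp only [Finset.card_univ, Fintype.card_fin, nsmul_eq_mul]
    field_simp
  have hyF : y ∈ F := by
    apply hconvF
    have := affineCombination_mem_convexHull
      (fun (i : Fin k) _ => by positivity : ∀ i ∈ Finset.univ, (0:ℝ) ≤ (k:ℝ)⁻¹)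
      hyweights (v := p)
    rwa [Finset.affineCombination_eq_linear_combination _ _ _ hyweights] at this
  set l : ℝ := 1 / (1 + ε) with hl
  have hl0 : 0 < l := by positivity
  have hl1 : l < 1 := by
    rw [hl]
    rw [div_lt_one (by linarith)]
    linarith
  have hident : l • z + (1 - l) • x = y := by
    rw [hz, hy, hxl, Finset.smul_sum, Finset.smul_sum, ← Finset.sum_add_distrib]
    refine Finset.sum_congr rfl fun i _ => ?_
    rw [smul_smul, smul_smul, ← add_smul]
    congr 1
    rw [hw', hl]
    field_simp
    ring
  exact (habs z (hFC hzF) x hxC l hl0 hl1 (by rw [hident]; exact hyF)).2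

end Aux3

variable {A : Type*} [NormedAddCommGroup A] [NormedSpace ℝ A] [FiniteDimensional ℝ A]

set_option maxHeartbeats 2000000 in
/-- A polytopic theory satisfying the postulate (for pure effects whose
certain face is a minus-face) has a uniformly pyramidal state space. -/
theorem polytopic_theory_uniformly_pyramidal
    (Apos : Set A) (u : A →ₗ[ℝ] ℝ) (hASS : IsAbstractStateSpace Apos u)
    (hpoly : IsPolytope (States Apos u))
    (hpost : ∀ f : Module.Dual ℝ A, IsPureEffect Apos u f →
      IsMinusFace (certainFace Apos u f) (States Apos u) →
      ∃ T : A →ₗ[ℝ] A, IsTransformation Apos u T ∧ (∀ x : A, u (T x) = f x) ∧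
        ∀ ω ∈ certainFace Apos u f, T ω = ω) :
    ∀ F : Set A, IsMinusFace F (States Apos u) →
      ∃ a ∈ States Apos u, a ∉ affineSpan ℝ F ∧
        States Apos u = convexHull ℝ (F ∪ {a}) := by
  classical
  obtain ⟨t, ht⟩ := hpoly
  intro F hFminus
  obtain ⟨⟨hFne, hFconv, hFsub, habs⟩, hdim⟩ := hFminus
  have hΩu : ∀ ω ∈ States Apos u, u ω = 1 := fun ω h => h.2
  have hΩpos : ∀ ω ∈ States Apos u, ω ∈ Apos := fun ω h => h.1
  have hΩconv : Convex ℝ (States Apos u) := by rw [ht]; exact convex_convexHull ℝ _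
  have htΩ : (t : Set A) ⊆ States Apos u := by rw [ht]; exact subset_convexHull ℝ _
  have hΩne : (States Apos u).Nonempty := hFne.mono hFsub
  have htne : t.Nonempty := by
    by_contra h
    rw [Finset.not_nonempty_iff_eq_empty] at h
    rw [h] at ht
    simp only [Finset.coe_empty, convexHull_empty] at ht
    exact hΩne.ne_empty ht
  -- span of the states is everything
  have hspanΩ : Submodule.span ℝ (States Apos u) = ⊤ := by
    rw [Submodule.eq_top_iff']
    intro x
    obtain ⟨y, hy, z, hz, rfl⟩ := hASS.generating x
    have key : ∀ w ∈ Apos, w ∈ Submodule.span ℝ (States Apos u) := by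
      intro w hw
      rcases eq_or_ne w 0 with rfl | hw0
      · exact Submodule.zero_mem _
      · have hu := hASS.unit_pos w hw hw0
        have hmem : (u w)⁻¹ • w ∈ States Apos u :=
          ⟨hASS.smul_mem _ (inv_nonneg.2 hu.le) w hw, by
            simp [inv_mul_cancel₀ hu.ne']⟩
        have h1 := Submodule.subset_span (R := ℝ) hmem
        have h2 := Submodule.smul_mem (Submodule.span ℝ (States Apos u)) (u w) h1
        rwa [smul_inv_smul₀ hu.ne'] at h2
    exact Submodule.sub_mem _ (key y hy) (key z hz)
  set n := Module.finrank ℝ A with hn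
  have hbddΩ : BddAbove (auxDimSet (States Apos u)) :=
    ⟨n, fun m hm => aux_bddAbove u hΩu m hm⟩
  have hsupΩ : sSup (auxDimSet (States Apos u)) = n := by
    apply le_antisymm
    · exact csSup_le ⟨0, aux_zero_mem _⟩ (fun m hm => aux_bddAbove u hΩu m hm)
    · obtain ⟨p, hpΩ, hpli⟩ := aux_extract (States Apos u)
      have hmem : Module.finrank ℝ (Submodule.span ℝ (States Apos u)) ∈
          auxDimSet (States Apos u) := ⟨p, hpΩ, aux_linIndep_affIndep hpli⟩
      have heq : Module.finrank ℝ (Submodule.span ℝ (States Apos u)) = n := by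
        rw [hspanΩ]; exact finrank_top ℝ A
      rw [heq] at hmem
      exact le_csSup hbddΩ hmem
  have hsdΩ : setDim (States Apos u) = (n : ℤ) - 1 := by
    rw [aux_setDim, hsupΩ]
  set kF := sSup (auxDimSet F) with hkF
  have hbddF : BddAbove (auxDimSet F) :=
    ⟨n, fun m hm => aux_bddAbove u (fun y hy => hΩu y (hFsub hy)) m hm⟩
  have hkF1 : 1 ≤ kF := le_csSup hbddF (aux_one_mem hFne)
  have hkFn : (kF : ℤ) = (n : ℤ) - 1 := by
    have h1 : setDim F = (kF : ℤ) - 1 := by rw [aux_setDim, hkF]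
    rw [h1, hsdΩ] at hdim
    omega
  have hn2 : 2 ≤ n := by omega
  set H := Submodule.span ℝ F with hH
  have hFH : F ⊆ (H : Set A) := Submodule.subset_span
  obtain ⟨pF, hpF, hpFA⟩ : kF ∈ auxDimSet F := Nat.sSup_mem ⟨0, aux_zero_mem F⟩ hbddF
  have hpFli : LinearIndependent ℝ pF :=
    aux_affIndep_linIndep u hpFA (fun i => hΩu _ (hFsub (hpF i)))
  have hHge : kF ≤ Module.finrank ℝ H := by
    have h1 : LinearIndependent ℝ (fun i => (⟨pF i, hFH (hpF i)⟩ : H)) := by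
      apply LinearIndependent.of_comp H.subtype
      exact hpFli
    have := h1.fintype_card_le_finrank
    simpa using this
  have hHne : H ≠ ⊤ := by
    intro htop
    obtain ⟨p, hpFmem, hpli⟩ := aux_extract F
    have hmem : Module.finrank ℝ (Submodule.span ℝ F) ∈ auxDimSet F :=
      ⟨p, hpFmem, aux_linIndep_affIndep hpli⟩
    have heq : Module.finrank ℝ (Submodule.span ℝ F) = n := by
      rw [← hH, htop]; exact finrank_top ℝ A
    rw [heq] at hmem
    have := le_csSup hbddF hmem
    omega
  have hHfr : Module.finrank ℝ H = n - 1 := by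
    have h2 : Module.finrank ℝ H < n := Submodule.finrank_lt hHne
    omega
  -- a nonzero functional with kernel H
  obtain ⟨g, hg0, hgmap⟩ :=
    Submodule.exists_dual_map_eq_bot_of_lt_top (lt_top_iff_ne_top.2 hHne) inferInstance
  have hHker : H ≤ LinearMap.ker g := by
    intro x hx
    rw [LinearMap.mem_ker]
    have hmem : g x ∈ Submodule.map g H := ⟨x, hx, rfl⟩
    rw [hgmap] at hmem
    simpa using hmem
  have hkerH : LinearMap.ker g = H := by
    have hrange : LinearMap.range g = ⊤ := by
      rw [LinearMap.range_eq_top]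
      intro y
      obtain ⟨x, hx⟩ : ∃ x, g x ≠ 0 := by
        by_contra h
        push_neg at h
        exact hg0 (LinearMap.ext fun x => by simpa using h x)
      exact ⟨(y / g x) • x, by rw [map_smul, smul_eq_mul, div_mul_cancel₀ _ hx]⟩
    have h1 := LinearMap.finrank_range_add_finrank_ker g
    rw [hrange, finrank_top, Module.finrank_self] at h1
    symm
    apply Submodule.eq_of_le_of_finrank_eq hHker
    rw [hHfr]
    omega
  -- the kernel-H machinery, for an arbitrary functional with kernel H
  have hmach : ∀ g' : Module.Dual ℝ A, LinearMap.ker g' = H →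
      ((∀ ω ∈ F, g' ω = 0) ∧ (∀ ω ∈ States Apos u, g' ω = 0 → ω ∈ F)) := by
    intro g' hker
    have hFg : ∀ ω ∈ F, g' ω = 0 := by
      intro ω hω
      have h1 : ω ∈ LinearMap.ker g' := by rw [hker]; exact hFH hω
      simpa using h1
    refine ⟨hFg, ?_⟩
    intro ω hω hgω
    have h1 : ω ∈ Submodule.span ℝ F := by
      rw [← hH, ← hker]
      exact LinearMap.mem_ker.2 hgω
    exact aux_face_affineSpan u hΩu ⟨hFne, hFconv, hFsub, habs⟩ hω
      (aux_mem_affineSpan u (fun y hy => hΩu y (hFsub hy)) h1 (hΩu ω hω))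
  -- sign dichotomy on vertices
  have hdich : (∀ v ∈ t, g v ≤ 0) ∨ (∀ v ∈ t, (-g) v ≤ 0) := by
    by_contra hcon
    push_neg at hcon
    obtain ⟨⟨v₂, hv₂t, hv₂⟩, ⟨v₁, hv₁t, hv₁⟩⟩ := hcon
    rw [LinearMap.neg_apply, neg_pos] at hv₁
    -- hv₂ : 0 < g v₂, hv₁ : g v₁ < 0
    set l : ℝ := g v₂ / (g v₂ - g v₁) with hl
    have hden : 0 < g v₂ - g v₁ := by linarith
    have hl0 : 0 < l := div_pos hv₂ hden
    have hl1 : l < 1 := by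
      rw [hl, div_lt_one hden]
      linarith
    set wpt := l • v₁ + (1 - l) • v₂ with hwpt
    have hwΩ : wpt ∈ States Apos u :=
      hΩconv (htΩ hv₁t) (htΩ hv₂t) hl0.le (by linarith) (by ring)
    have hgw : g wpt = 0 := by
      rw [hwpt, map_add, map_smul, map_smul, smul_eq_mul, smul_eq_mul, hl]
      field_simp
      ring
    have hwF : wpt ∈ F := (hmach g hkerH).2 wpt hwΩ hgw
    have hboth := habs v₁ (htΩ hv₁t) v₂ (htΩ hv₂t) l hl0 hl1 hwF
    have := (hmach g hkerH).1 v₂ hboth.2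
    linarith
  -- the main construction
  have main : ∀ g' : Module.Dual ℝ A, LinearMap.ker g' = H → (∀ v ∈ t, g' v ≤ 0) →
      ∃ a ∈ States Apos u, a ∉ affineSpan ℝ F ∧
        States Apos u = convexHull ℝ (F ∪ {a}) := by
    clear hdich hgmap hg0 hHker hkerH
    intro g hker hneg
    obtain ⟨hFg, hLF⟩ := hmach g hker
    have hne0 : ∃ v ∈ t, g v ≠ 0 := by
      by_contra hall
      push_neg at hall
      have hsub2 : States Apos u ⊆ F := by
        intro ω hω
        refine hLF ω hω ?_
        have hconv : States Apos u ⊆ (LinearMap.ker g : Set A) := by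
          rw [ht]
          refine convexHull_min ?_ (LinearMap.ker g).convex
          intro v hv
          exact LinearMap.mem_ker.2 (hall v hv)
        simpa using hconv hω
      have hFeq : F = States Apos u := Set.Subset.antisymm hFsub hsub2
      rw [hFeq] at hdim
      omega
    obtain ⟨v0, hv0t, hv0⟩ := hne0
    obtain ⟨a, hat, hamin⟩ := t.exists_min_image g htne
    set m := g a with hm
    have hm0 : m < 0 := by
      have h1 : m ≤ g v0 := hamin v0 hv0t
      have h2 : g v0 ≤ 0 := hneg v0 hv0t
      cases' lt_or_eq_of_le h2 with h3 h3
      · linarith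
      · exact absurd h3 hv0
    obtain ⟨f, hfdef⟩ : ∃ f : Module.Dual ℝ A, f = u - m⁻¹ • g := ⟨_, rfl⟩
    have hfval : ∀ x, f x = u x - m⁻¹ * g x := fun x => by
      rw [hfdef]; simp
    have haΩ : a ∈ States Apos u := htΩ hat
    have hfa : f a = 0 := by
      rw [hfval, hΩu a haΩ, ← hm, inv_mul_cancel₀ hm0.ne, sub_self]
    have hminv : m⁻¹ < 0 := inv_lt_zero.mpr hm0
    have hfF : ∀ ω ∈ F, f ω = 1 := by
      intro ω hω
      rw [hfval, hΩu ω (hFsub hω), hFg ω hω, mul_zero, sub_zero]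
    -- f is an effect
    have hfΩ : ∀ ω ∈ States Apos u, 0 ≤ f ω ∧ f ω ≤ 1 := by
      have h1 : ∀ v ∈ (t : Set A), v ∈ {x : A | 0 ≤ f x ∧ f x ≤ 1} := by
        intro v hv
        have hgv : g v ≤ 0 := hneg v hv
        have hmv : m ≤ g v := hamin v hv
        rw [mem_setOf_eq, hfval, hΩu v (htΩ hv)]
        constructor
        · have h3 : m⁻¹ * g v ≤ m⁻¹ * m := mul_le_mul_of_nonpos_left hmv hminv.le
          rw [inv_mul_cancel₀ hm0.ne] at h3
          linarith
        · have h4 : 0 ≤ -m⁻¹ * -(g v) := mul_nonneg (by linarith) (by linarith)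
          rw [neg_mul_neg] at h4
          linarith
      have hcx : Convex ℝ {x : A | 0 ≤ f x ∧ f x ≤ 1} := by
        have hcx1 : Convex ℝ {x : A | 0 ≤ f x} := convex_halfSpace_ge f.isLinear 0
        have hcx2 : Convex ℝ {x : A | f x ≤ 1} := convex_halfSpace_le f.isLinear 1
        have : {x : A | 0 ≤ f x ∧ f x ≤ 1} = {x : A | 0 ≤ f x} ∩ {x : A | f x ≤ 1} := rfl
        rw [this]
        exact hcx1.inter hcx2
      intro ω hω
      rw [ht] at hω
      exact convexHull_min h1 hcx hω
    -- certain face of f is F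
    have hcf : certainFace Apos u f = F := by
      ext ω
      constructor
      · rintro ⟨hωΩ, hfω⟩
        apply hLF ω hωΩ
        rw [hfval, hΩu ω hωΩ] at hfω
        have h5 : m⁻¹ * g ω = 0 := by linarith
        rcases mul_eq_zero.1 h5 with h6 | h6
        · exact absurd h6 (inv_ne_zero hm0.ne)
        · exact h6
      · intro hωF
        exact ⟨hFsub hωF, hfF ω hωF⟩
    have hga : g a ≠ 0 := by rw [← hm]; exact hm0.ne
    have haH : a ∉ H := by
      intro h
      rw [← hker] at h
      exact hga (LinearMap.mem_ker.1 h)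
    have hanotin : a ∉ affineSpan ℝ F := by
      intro hmem
      have h2 := affineSpan_le_toAffineSubspace_span hmem
      have h3 : a ∈ H := by simpa using h2
      exact haH h3
    -- span of H and a is everything
    have hsup : H ⊔ Submodule.span ℝ {a} = ⊤ := by
      have hlt : H < H ⊔ Submodule.span ℝ {a} := by
        apply lt_of_le_of_ne le_sup_left
        intro heq
        apply haH
        have : Submodule.span ℝ {a} ≤ H := by
          rw [heq]; exact le_sup_right
        exact this (Submodule.mem_span_singleton_self a)
      have h3 := Submodule.finrank_lt_finrank_of_lt hlt
      have h4 : Module.finrank ℝ (H ⊔ Submodule.span ℝ {a} : Submodule ℝ A) ≤ n :=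
        Submodule.finrank_le _
      apply Submodule.eq_top_of_finrank_eq
      omega
    have hvanish : ∀ h : Module.Dual ℝ A, (∀ ω ∈ F, h ω = 0) → h a = 0 → h = 0 := by
      intro h hF0 ha0
      have hHh : H ≤ LinearMap.ker h := by
        rw [hH]
        exact Submodule.span_le.2 fun ω hω => LinearMap.mem_ker.2 (hF0 ω hω)
      have hah : Submodule.span ℝ {a} ≤ LinearMap.ker h := by
        rw [Submodule.span_singleton_le_iff_mem]
        exact LinearMap.mem_ker.2 ha0
      have htot : (⊤ : Submodule ℝ A) ≤ LinearMap.ker h := by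
        rw [← hsup]; exact sup_le hHh hah
      ext x
      simpa using htot Submodule.mem_top
    -- f is a pure effect
    have hpure : IsPureEffect Apos u f := by
      refine ⟨hfΩ, ?_⟩
      rintro x₁ hx₁ x₂ hx₂ ⟨c₁, c₂, hc₁, hc₂, hc12, hsum⟩
      have happ : ∀ y : A, c₁ * x₁ y + c₂ * x₂ y = f y := by
        intro y
        have h7 := congrArg (fun φ : Module.Dual ℝ A => φ y) hsum
        simpa using h7
      have hallF : ∀ ω ∈ F, x₁ ω = f ω ∧ x₂ ω = f ω := by
        intro ω hω
        have hωΩ := hFsub hω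
        have h1 := (hx₁ ω hωΩ).2
        have h2 := (hx₂ ω hωΩ).2
        have h3 := happ ω
        rw [hfF ω hω] at h3 ⊢
        constructor <;> nlinarith
      have hava : x₁ a = f a ∧ x₂ a = f a := by
        have h1 := (hx₁ a haΩ).1
        have h2 := (hx₂ a haΩ).1
        have h3 := happ a
        rw [hfa] at h3 ⊢
        constructor <;> nlinarith
      · have h8 := hvanish (x₁ - f)
          (fun ω hω => by rw [LinearMap.sub_apply, (hallF ω hω).1, sub_self])
          (by rw [LinearMap.sub_apply, hava.1, sub_self])
        rw [sub_eq_zero] at h8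
        exact h8
    -- apply the postulate
    have hmf : IsMinusFace (certainFace Apos u f) (States Apos u) := by
      rw [hcf]; exact ⟨⟨hFne, hFconv, hFsub, habs⟩, hdim⟩
    obtain ⟨T, ⟨hTpos, hTub⟩, hTu, hTfix⟩ := hpost f hpure hmf
    have hTfix' : ∀ ω ∈ F, T ω = ω := by
      intro ω hω
      exact hTfix ω (by rw [hcf]; exact hω)
    have hTH : ∀ x ∈ H, T x = x := by
      intro x hx
      rw [hH] at hx
      induction hx using Submodule.span_induction with
      | mem y hy => exact hTfix' y hy
      | zero => simp
      | add y z _ _ hy hz => rw [map_add, hy, hz]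
      | smul c y _ hy => rw [map_smul, hy]
    have hTa : T a = 0 := by
      by_contra hTa0
      have h1 : T a ∈ Apos := hTpos a (hΩpos a haΩ)
      have h2 := hASS.unit_pos _ h1 hTa0
      rw [hTu a, hfa] at h2
      exact lt_irrefl 0 h2
    have hTform : ∀ x, T x = x - (g x / m) • a := by
      intro x
      have hker' : x - (g x / m) • a ∈ H := by
        rw [← hker, LinearMap.mem_ker, map_sub, map_smul, smul_eq_mul, ← hm]
        field_simp
        rw [div_self hm0.ne, sub_self, mul_zero]
      have h9 := hTH _ hker'
      rw [map_sub, map_smul, hTa, smul_zero, sub_zero] at h9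
      exact h9
    -- conclusion
    refine ⟨a, haΩ, hanotin, ?_⟩
    apply Set.Subset.antisymm
    · intro ω hω
      obtain ⟨hs0, hs1⟩ := hfΩ ω hω
      have hgs : g ω / m = 1 - f ω := by
        rw [hfval, hΩu ω hω]
        field_simp
        ring
      have hTω : T ω = ω - (1 - f ω) • a := by rw [hTform, hgs]
      have hTΩpos : T ω ∈ Apos := hTpos ω (hΩpos ω hω)
      have hTu' : u (T ω) = f ω := hTu ω
      rcases eq_or_lt_of_le hs0 with h0 | h0
      · have hT0 : T ω = 0 := by
          by_contra hne
          have h10 := hASS.unit_pos _ hTΩpos hne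
          rw [hTu'] at h10
          linarith
        have hωa : ω = a := by
          rw [hT0, ← h0, sub_zero, one_smul] at hTω
          have h11 := hTω.symm
          rwa [sub_eq_zero] at h11
        rw [hωa]
        exact subset_convexHull ℝ _ (Or.inr rfl)
      · set ω' := (f ω)⁻¹ • T ω with hω'
        have hω'Ω : ω' ∈ States Apos u :=
          ⟨hASS.smul_mem _ (inv_nonneg.2 h0.le) _ hTΩpos, by
            rw [hω', map_smul, hTu', smul_eq_mul, inv_mul_cancel₀ h0.ne']⟩
        have hfTω : f (T ω) = f ω := by
          rw [hTω, map_sub, map_smul, hfa, smul_eq_mul, mul_zero, sub_zero]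
        have hfω' : f ω' = 1 := by
          rw [hω', map_smul, smul_eq_mul, hfTω, inv_mul_cancel₀ h0.ne']
        have hω'F : ω' ∈ F := by
          rw [← hcf]
          exact ⟨hω'Ω, hfω'⟩
        have hrepr : ω = (f ω) • ω' + (1 - f ω) • a := by
          rw [hω', smul_smul, mul_inv_cancel₀ h0.ne', one_smul, hTω]
          abel
        rw [hrepr]
        exact (convex_convexHull ℝ (F ∪ {a}))
          (subset_convexHull ℝ _ (Or.inl hω'F))
          (subset_convexHull ℝ _ (Or.inr rfl))
          h0.le (by linarith) (by ring)
    · refine convexHull_min ?_ hΩconv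
      rintro x (hx | hx)
      · exact hFsub hx
      · rw [mem_singleton_iff] at hx
        rw [hx]
        exact haΩ
  rcases hdich with h | h
  · exact main g hkerH h
  · refine main (-g) ?_ h
    rw [← hkerH]
    ext x
    simp [LinearMap.mem_ker, neg_eq_zero]
end
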